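/- arXiv:2404.02311 — 6 statements merged into one kernel-verified Lean document; each statement's English description precedes it below -/
import Mathlib

section
/- Let D be a nontrivial 2-(p^d,k,2) design with point set V = GF(p)^d admitting a flag-transitive automorphism group G = T ⋊ G_0, where T is the translation group of V and G_0 ≤ GL_d(p) is the stabilizer of the zero vector, and suppose the replication number r is even. Then for every nonzero vector x ∈ V, r/2 divides the length of the G_0-orbit of x; in particular r/2 divides p^d − 1. -/
open Finset
open scoped Classical

theorem orbit_key (p d r : ℕ) [Fact p.Prime]
    (𝓑 : Finset (Finset (Fin d → ZMod p)))
    (G₀ : Subgroup ((Fin d → ZMod p) ≃ₗ[ZMod p] (Fin d → ZMod p)))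
    (hlam : ∀ x y : Fin d → ZMod p, x ≠ y →
      (𝓑.filter (fun B => x ∈ B ∧ y ∈ B)).card = 2)
    (hr : ∀ x : Fin d → ZMod p, (𝓑.filter (fun B => x ∈ B)).card = r)
    (hflag : ∀ B ∈ 𝓑, ∀ C ∈ 𝓑, ∀ x ∈ B, ∀ y ∈ C,
      ∃ g ∈ G₀, ∃ v : Fin d → ZMod p,
        B.image (fun z => g z + v) = C ∧ g x + v = y)
    (hreven : Even r)
    (x : Fin d → ZMod p) (hx : x ≠ 0) :
    r / 2 ∣ (Finset.univ.filter (fun y : Fin d → ZMod p => ∃ g ∈ G₀, g x = y)).card := by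
  classical
  set O : Finset (Fin d → ZMod p) :=
    Finset.univ.filter (fun y : Fin d → ZMod p => ∃ g ∈ G₀, g x = y) with hOdef
  have hxO : x ∈ O := by
    simp only [hOdef, mem_filter, mem_univ, true_and]
    exact ⟨1, one_mem _, rfl⟩
  have hO0 : ∀ y ∈ O, y ≠ 0 := by
    intro y hy
    simp only [hOdef, mem_filter, mem_univ, true_and] at hy
    obtain ⟨g, -, rfl⟩ := hy
    intro h
    apply hx
    have h2 : (g : (Fin d → ZMod p) ≃ₗ[ZMod p] _) x
        = (g : (Fin d → ZMod p) ≃ₗ[ZMod p] _) 0 := by simpa using h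
    exact (g : (Fin d → ZMod p) ≃ₗ[ZMod p] _).injective h2
  -- O is G₀-invariant
  have hOinv : ∀ g ∈ G₀, ∀ y ∈ O, (g : (Fin d → ZMod p) ≃ₗ[ZMod p] _) y ∈ O := by
    intro g hg y hy
    simp only [hOdef, mem_filter, mem_univ, true_and] at hy ⊢
    obtain ⟨h, hh, rfl⟩ := hy
    exact ⟨g * h, mul_mem hg hh, rfl⟩
  set S : Finset (Finset (Fin d → ZMod p)) := 𝓑.filter (fun B => (0 : Fin d → ZMod p) ∈ B) with hSdef
  have hScard : S.card = r := hr 0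
  -- double counting
  have key : ∑ B ∈ S, (O.filter (· ∈ B)).card = 2 * O.card := by
    have : ∀ B ∈ S, (O.filter (· ∈ B)).card = ∑ y ∈ O, if y ∈ B then 1 else 0 := by
      intro B _; rw [Finset.card_filter]
    rw [Finset.sum_congr rfl this, Finset.sum_comm]
    have inner : ∀ y ∈ O, (∑ B ∈ S, if y ∈ B then 1 else 0) = 2 := by
      intro y hy
      have : (∑ B ∈ S, if y ∈ B then 1 else 0) = (S.filter (fun B => y ∈ B)).card := by
        rw [Finset.card_filter]
      rw [this]
      have : S.filter (fun B => y ∈ B) = 𝓑.filter (fun B => (0 : Fin d → ZMod p) ∈ B ∧ y ∈ B) := by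
        rw [hSdef, Finset.filter_filter]
      rw [this]
      exact hlam 0 y (Ne.symm (hO0 y hy))
    rw [Finset.sum_congr rfl inner, Finset.sum_const, smul_eq_mul, mul_comm]
  have hSne : S.Nonempty := by
    by_contra h
    rw [Finset.not_nonempty_iff_eq_empty] at h
    rw [h, Finset.sum_empty] at key
    have : O.card ≠ 0 := Finset.card_ne_zero_of_mem hxO
    omega
  obtain ⟨B₀, hB₀⟩ := hSne
  -- constancy of intersection numbers
  have const : ∀ B ∈ S, (O.filter (· ∈ B)).card = (O.filter (· ∈ B₀)).card := by
    intro B hB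
    simp only [hSdef, mem_filter] at hB hB₀
    obtain ⟨g, hg, v, himg, hzero⟩ := hflag B hB.1 B₀ hB₀.1 0 hB.2 0 hB₀.2
    have hv : v = 0 := by simpa using hzero
    rw [hv] at himg
    simp only [add_zero] at himg
    have himage : O.filter (· ∈ B₀) = (O.filter (· ∈ B)).image
        (fun z => (g : (Fin d → ZMod p) ≃ₗ[ZMod p] _) z) := by
      ext y
      simp only [Finset.mem_image, Finset.mem_filter]
      constructor
      · rintro ⟨hyO, hyB₀⟩
        rw [← himg] at hyB₀
        simp only [Finset.mem_image] at hyB₀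
        obtain ⟨z, hzB, rfl⟩ := hyB₀
        refine ⟨z, ⟨?_, hzB⟩, rfl⟩
        have h3 := hOinv g⁻¹ (inv_mem hg) _ hyO
        have h4 : g⁻¹ (g z) = z := g.symm_apply_apply z
        rwa [h4] at h3
      · rintro ⟨z, ⟨hzO, hzB⟩, rfl⟩
        refine ⟨hOinv g hg z hzO, ?_⟩
        rw [← himg]
        exact Finset.mem_image_of_mem _ hzB
    rw [himage, Finset.card_image_of_injective _ (g : (Fin d → ZMod p) ≃ₗ[ZMod p] _).injective]
  have key2 : r * (O.filter (· ∈ B₀)).card = 2 * O.card := by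
    rw [← key, Finset.sum_congr rfl const, Finset.sum_const, smul_eq_mul, hScard]
  obtain ⟨m, hm⟩ := hreven
  have hr2 : r / 2 = m := by omega
  rw [hr2]
  refine ⟨(O.filter (· ∈ B₀)).card, ?_⟩
  have h5 : 2 * (m * (O.filter (· ∈ B₀)).card) = 2 * O.card := by
    rw [← key2, hm]; ring
  omega

/-- Let `D` be a nontrivial 2-(p^d,k,2) design with point set
`V = GF(p)^d` admitting a flag-transitive automorphism group `G = T ⋊ G₀` with
`G₀ ≤ GL_d(p)`, and suppose the replication number `r` is even.  Then for every
nonzero `x ∈ V`, `r/2` divides the length of the `G₀`-orbit of `x`; in particular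
`r/2` divides `p^d - 1`. -/
theorem stmt_1 (p d k r : ℕ) [Fact p.Prime]
    (𝓑 : Finset (Finset (Fin d → ZMod p)))
    (G₀ : Subgroup ((Fin d → ZMod p) ≃ₗ[ZMod p] (Fin d → ZMod p)))
    (hk : ∀ B ∈ 𝓑, B.card = k)
    (hlam : ∀ x y : Fin d → ZMod p, x ≠ y →
      (𝓑.filter (fun B => x ∈ B ∧ y ∈ B)).card = 2)
    (hr : ∀ x : Fin d → ZMod p, (𝓑.filter (fun B => x ∈ B)).card = r)
    (hk2 : 2 < k) (hkv : k < p ^ d)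
    (hinv : ∀ B ∈ 𝓑, ∀ g ∈ G₀, ∀ v : Fin d → ZMod p,
      B.image (fun x => g x + v) ∈ 𝓑)
    (hflag : ∀ B ∈ 𝓑, ∀ C ∈ 𝓑, ∀ x ∈ B, ∀ y ∈ C,
      ∃ g ∈ G₀, ∃ v : Fin d → ZMod p,
        B.image (fun z => g z + v) = C ∧ g x + v = y)
    (hreven : Even r) :
    (∀ x : Fin d → ZMod p, x ≠ 0 →
      r / 2 ∣ {y : Fin d → ZMod p | ∃ g ∈ G₀, g x = y}.ncard) ∧
    r / 2 ∣ p ^ d - 1 := by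
  classical
  have ncard_eq : ∀ x : Fin d → ZMod p,
      {y : Fin d → ZMod p | ∃ g ∈ G₀, g x = y}.ncard =
      (Finset.univ.filter (fun y : Fin d → ZMod p => ∃ g ∈ G₀, g x = y)).card := by
    intro x
    rw [Set.ncard_eq_toFinset_card', Set.toFinset_setOf]
  have part1 : ∀ x : Fin d → ZMod p, x ≠ 0 →
      r / 2 ∣ {y : Fin d → ZMod p | ∃ g ∈ G₀, g x = y}.ncard := by
    intro x hx
    rw [ncard_eq]
    exact orbit_key p d r 𝓑 G₀ hlam hr hflag hreven x hx
  refine ⟨part1, ?_⟩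
  -- partition nonzero vectors into orbits
  set f : (Fin d → ZMod p) → Finset (Fin d → ZMod p) :=
    fun x => Finset.univ.filter (fun y => ∃ g ∈ G₀, g x = y) with hfdef
  set nz : Finset (Fin d → ZMod p) := Finset.univ.erase 0 with hnzdef
  have hcardV : Fintype.card (Fin d → ZMod p) = p ^ d := by simp
  have hnzcard : nz.card = p ^ d - 1 := by
    rw [hnzdef, Finset.card_erase_of_mem (Finset.mem_univ _), Finset.card_univ, hcardV]
  have horbmem : ∀ x : Fin d → ZMod p, x ∈ f x := by
    intro x
    simp only [hfdef, mem_filter, mem_univ, true_and]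
    exact ⟨1, one_mem _, rfl⟩
  have horbne : ∀ x : Fin d → ZMod p, x ≠ 0 → ∀ y ∈ f x, y ≠ 0 := by
    intro x hx y hy
    simp only [hfdef, mem_filter, mem_univ, true_and] at hy
    obtain ⟨g, -, rfl⟩ := hy
    intro h
    apply hx
    have h2 : (g : (Fin d → ZMod p) ≃ₗ[ZMod p] _) x
        = (g : (Fin d → ZMod p) ≃ₗ[ZMod p] _) 0 := by simpa using h
    exact (g : (Fin d → ZMod p) ≃ₗ[ZMod p] _).injective h2
  have horbeq : ∀ x : Fin d → ZMod p, ∀ y ∈ f x, f y = f x := by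
    intro x y hy
    simp only [hfdef, mem_filter, mem_univ, true_and] at hy
    obtain ⟨h, hh, rfl⟩ := hy
    ext z
    simp only [hfdef, mem_filter, mem_univ, true_and]
    constructor
    · rintro ⟨g, hg, rfl⟩
      exact ⟨g * h, mul_mem hg hh, rfl⟩
    · rintro ⟨g, hg, rfl⟩
      refine ⟨g * h⁻¹, mul_mem hg (inv_mem hh), ?_⟩
      show (g : _) ((h⁻¹ : _) ((h : _) x)) = _
      congr 1
      exact (h : (Fin d → ZMod p) ≃ₗ[ZMod p] _).symm_apply_apply x
  have hsum : nz.card = ∑ t ∈ nz.image f, (nz.filter (fun x => f x = t)).card :=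
    Finset.card_eq_sum_card_fiberwise (fun x hx => Finset.mem_image_of_mem f hx)
  have hfiber : ∀ t ∈ nz.image f, nz.filter (fun x => f x = t) = t := by
    intro t ht
    obtain ⟨x₀, hx₀, rfl⟩ := Finset.mem_image.mp ht
    have hx₀ne : x₀ ≠ 0 := by
      simp only [hnzdef, Finset.mem_erase] at hx₀; exact hx₀.1
    ext y
    simp only [Finset.mem_filter, hnzdef, Finset.mem_erase, Finset.mem_univ, and_true]
    constructor
    · rintro ⟨-, hfy⟩
      rw [← hfy]; exact horbmem y
    · intro hy
      exact ⟨horbne x₀ hx₀ne y hy, horbeq x₀ y hy⟩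
  rw [← hnzcard, hsum]
  apply Finset.dvd_sum
  intro t ht
  rw [hfiber t ht]
  obtain ⟨x₀, hx₀, rfl⟩ := Finset.mem_image.mp ht
  have hx₀ne : x₀ ≠ 0 := by
    simp only [hnzdef, Finset.mem_erase] at hx₀; exact hx₀.1
  exact orbit_key p d r 𝓑 G₀ hlam hr hflag hreven x₀ hx₀ne
end

section
/- Let D be a nontrivial 2-(p^d,k,2) design with point set V = GF(p)^d admitting a flag-transitive automorphism group G = T ⋊ G_0 (T the translation group of V, G_0 ≤ GL_d(p) the stabilizer of 0), with even replication number r. Let B be a block of D containing the zero vector and set p^t = |T_B|, where T_B is the stabilizer of B in T. Then the quotient G_B/T_B is isomorphic to a subgroup J of G_0 of index [G_0 : J] = 2·p^t·(p^d−1)/(k(k−1)), and J contains an isomorphic copy of G_{0,B} = G_0 ∩ G_B. -/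
@[simp] lemma LinearEquiv.mul_apply' {R M : Type*} [CommRing R] [AddCommGroup M] [Module R M]
    (a b : M ≃ₗ[R] M) (x : M) : (a * b) x = a (b x) := rfl

@[simp] lemma LinearEquiv.inv_apply' {R M : Type*} [CommRing R] [AddCommGroup M] [Module R M]
    (a : M ≃ₗ[R] M) (x : M) : a⁻¹ x = a.symm x := rfl

/-- The affine permutation `x ↦ g x + v` of `V = GF(p)^d`. -/
def aff {p d : ℕ} (g : (Fin d → ZMod p) ≃ₗ[ZMod p] (Fin d → ZMod p)) (v : Fin d → ZMod p) :
    Equiv.Perm (Fin d → ZMod p) :=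
  g.toEquiv.trans (Equiv.addRight v)

@[simp] lemma aff_apply {p d : ℕ} (g : (Fin d → ZMod p) ≃ₗ[ZMod p] (Fin d → ZMod p))
    (v x : Fin d → ZMod p) : aff g v x = g x + v := rfl

/-- The affine group `T ⋊ G₀` of all transformations `x ↦ g x + v` with `g ∈ G₀`.
Taking `G₀ = ⊥` yields the translation group `T`. -/
def affGroup {p d : ℕ} (G₀ : Subgroup ((Fin d → ZMod p) ≃ₗ[ZMod p] (Fin d → ZMod p))) :
    Subgroup (Equiv.Perm (Fin d → ZMod p)) where
  carrier := {σ | ∃ g ∈ G₀, ∃ v, σ = aff g v}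
  one_mem' := ⟨1, G₀.one_mem, 0, by ext x; simp [aff]⟩
  mul_mem' := by
    rintro σ τ ⟨g, hg, v, rfl⟩ ⟨h, hh, w, rfl⟩
    refine ⟨g * h, mul_mem hg hh, g w + v, ?_⟩
    ext x
    simp [Equiv.Perm.mul_apply, map_add, add_assoc]
  inv_mem' := by
    rintro σ ⟨g, hg, v, rfl⟩
    refine ⟨g⁻¹, inv_mem hg, -(g⁻¹ v), ?_⟩
    rw [inv_eq_iff_mul_eq_one]
    ext x
    simp [Equiv.Perm.mul_apply, map_add, map_neg]

/-- The setwise stabilizer of a finite set of points inside the symmetric group. -/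
def permBlockStab {V : Type*} [DecidableEq V] (B : Finset V) : Subgroup (Equiv.Perm V) where
  carrier := {σ | B.image σ = B}
  one_mem' := by simp
  mul_mem' := by
    intro σ τ hσ hτ
    show B.image ⇑(σ * τ) = B
    have : B.image ⇑(σ * τ) = (B.image ⇑τ).image ⇑σ := by
      rw [Finset.image_image]; rfl
    rw [this, hτ, hσ]
  inv_mem' := by
    intro σ hσ
    show B.image ⇑σ⁻¹ = B
    conv_lhs => rw [← hσ]
    rw [Finset.image_image]
    simp [Function.comp_def]

/-- The setwise stabilizer of a finite set inside the group of linear automorphisms. -/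
def linBlockStab {R V : Type*} [CommRing R] [AddCommGroup V] [Module R V] [DecidableEq V]
    (B : Finset V) : Subgroup (V ≃ₗ[R] V) where
  carrier := {g | B.image g = B}
  one_mem' := by simp [LinearEquiv.coe_one]
  mul_mem' := by
    intro σ τ hσ hτ
    show B.image ⇑(σ * τ) = B
    have : B.image ⇑(σ * τ) = (B.image ⇑τ).image ⇑σ := by
      rw [Finset.image_image]; rfl
    rw [this, hτ, hσ]
  inv_mem' := by
    intro σ hσ
    show B.image ⇑σ⁻¹ = B
    conv_lhs => rw [← hσ]
    rw [Finset.image_image]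
    have : (⇑σ⁻¹ ∘ ⇑σ) = id := by
      funext x
      exact σ.symm_apply_apply x
    rw [this, Finset.image_id]


lemma aff_mul {p d : ℕ} (g h : (Fin d → ZMod p) ≃ₗ[ZMod p] (Fin d → ZMod p))
    (v w : Fin d → ZMod p) : aff g v * aff h w = aff (g * h) (g w + v) := by
  ext x
  simp [Equiv.Perm.mul_apply, map_add, add_assoc]

lemma aff_one {p d : ℕ} : aff (1 : (Fin d → ZMod p) ≃ₗ[ZMod p] (Fin d → ZMod p)) 0 = 1 := by
  ext x; simp [aff]

lemma aff_inv {p d : ℕ} (g : (Fin d → ZMod p) ≃ₗ[ZMod p] (Fin d → ZMod p))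
    (v : Fin d → ZMod p) : (aff g v)⁻¹ = aff g⁻¹ (-(g⁻¹ v)) := by
  symm
  apply eq_inv_of_mul_eq_one_right
  rw [aff_mul]
  have : g ((- (g⁻¹ v))) + v = 0 := by
    rw [map_neg]
    have : g (g⁻¹ v) = v := by simp
    rw [this]; ring
  rw [this, mul_inv_cancel, aff_one]

lemma aff_inj {p d : ℕ} {g g' : (Fin d → ZMod p) ≃ₗ[ZMod p] (Fin d → ZMod p)}
    {v v' : Fin d → ZMod p} (h : aff g v = aff g' v') : g = g' ∧ v = v' := by
  have h0 := congrArg (fun σ : Equiv.Perm (Fin d → ZMod p) => σ 0) h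
  simp only [aff_apply, map_zero, zero_add] at h0
  subst h0
  refine ⟨LinearEquiv.ext fun x => ?_, rfl⟩
  have := congrArg (fun σ : Equiv.Perm (Fin d → ZMod p) => σ x) h
  simp only [aff_apply] at this
  simpa using this

lemma double_count {α β : Type*} (s : Finset α) (t : Finset β) (P : α → β → Prop)
    [∀ a b, Decidable (P a b)] :
    ∑ a ∈ s, (t.filter (fun b => P a b)).card = ∑ b ∈ t, (s.filter (fun a => P a b)).card := by
  simp_rw [Finset.card_filter]
  exact Finset.sum_comm

lemma mem_permBlockStab {V : Type*} [DecidableEq V] {B : Finset V} {σ : Equiv.Perm V} :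
    σ ∈ permBlockStab B ↔ B.image ⇑σ = B := Iff.rfl

lemma mem_affGroup {p d : ℕ}
    {G₀ : Subgroup ((Fin d → ZMod p) ≃ₗ[ZMod p] (Fin d → ZMod p))}
    {σ : Equiv.Perm (Fin d → ZMod p)} :
    σ ∈ affGroup G₀ ↔ ∃ g ∈ G₀, ∃ v, σ = aff g v := Iff.rfl

/-- The candidate subgroup `J ≤ G₀`: linear parts of affine block stabilizers. -/
def Jsub {p d : ℕ} (G₀ : Subgroup ((Fin d → ZMod p) ≃ₗ[ZMod p] (Fin d → ZMod p)))
    (B : Finset (Fin d → ZMod p)) :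
    Subgroup ((Fin d → ZMod p) ≃ₗ[ZMod p] (Fin d → ZMod p)) where
  carrier := {g | g ∈ G₀ ∧ ∃ v, aff g v ∈ permBlockStab B}
  one_mem' := ⟨G₀.one_mem, 0, by rw [aff_one]; exact one_mem _⟩
  mul_mem' := by
    rintro a b ⟨ha, v, hv⟩ ⟨hb, w, hw⟩
    exact ⟨mul_mem ha hb, a w + v, by rw [← aff_mul]; exact mul_mem hv hw⟩
  inv_mem' := by
    rintro a ⟨ha, v, hv⟩
    exact ⟨inv_mem ha, -(a⁻¹ v), by rw [← aff_inv]; exact inv_mem hv⟩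

open Pointwise in
/-- Let `D` be a nontrivial flag-transitive 2-(p^d,k,2) design with point set
`V = GF(p)^d`, automorphism group `G = T ⋊ G₀` (`G₀ ≤ GL_d(p)`), `r` even, and let `B` be a
block through `0` with `p^t = |T_B|`.  Then `G_B/T_B` is isomorphic to a subgroup `J` of `G₀`
of index `2·p^t·(p^d−1)/(k(k−1))` containing an isomorphic copy of `G_{0,B}`. -/
theorem stmt_2 (p d k r : ℕ) [Fact p.Prime]
    (𝓑 : Finset (Finset (Fin d → ZMod p)))
    (G₀ : Subgroup ((Fin d → ZMod p) ≃ₗ[ZMod p] (Fin d → ZMod p)))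
    (hk : ∀ B ∈ 𝓑, B.card = k)
    (hlam : ∀ x y : Fin d → ZMod p, x ≠ y →
      (𝓑.filter (fun B => x ∈ B ∧ y ∈ B)).card = 2)
    (hr : ∀ x : Fin d → ZMod p, (𝓑.filter (fun B => x ∈ B)).card = r)
    (hk2 : 2 < k) (hkv : k < p ^ d)
    (hinv : ∀ B ∈ 𝓑, ∀ g ∈ G₀, ∀ v : Fin d → ZMod p,
      B.image (fun x => g x + v) ∈ 𝓑)
    (hflag : ∀ B ∈ 𝓑, ∀ C ∈ 𝓑, ∀ x ∈ B, ∀ y ∈ C,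
      ∃ g ∈ G₀, ∃ v : Fin d → ZMod p,
        B.image (fun z => g z + v) = C ∧ g x + v = y)
    (hreven : Even r)
    (B : Finset (Fin d → ZMod p)) (hB : B ∈ 𝓑) (h0B : (0 : Fin d → ZMod p) ∈ B) :
    ∃ J : Subgroup ((Fin d → ZMod p) ≃ₗ[ZMod p] (Fin d → ZMod p)), J ≤ G₀ ∧
      (∃ φ : ↥(affGroup G₀ ⊓ permBlockStab B) →* ↥J,
        Function.Surjective φ ∧
        φ.ker = Subgroup.subgroupOf (affGroup ⊥ ⊓ permBlockStab B)
          (affGroup G₀ ⊓ permBlockStab B)) ∧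
      (Subgroup.subgroupOf J G₀).index * (k * (k - 1)) =
        2 * Nat.card ↥(affGroup (⊥ : Subgroup ((Fin d → ZMod p) ≃ₗ[ZMod p] (Fin d → ZMod p)))
            ⊓ permBlockStab B) * (p ^ d - 1) ∧
      ∃ ψ : ↥(G₀ ⊓ linBlockStab B) →* ↥J, Function.Injective ψ := by

  classical
  haveI : NeZero p := ⟨(Fact.out : p.Prime).ne_zero⟩
  haveI : Finite ((Fin d → ZMod p) ≃ₗ[ZMod p] (Fin d → ZMod p)) :=
    Finite.of_injective (fun e => (⇑e : (Fin d → ZMod p) → (Fin d → ZMod p)))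
      DFunLike.coe_injective
  set J := Jsub G₀ B with hJdef
  have hJle : J ≤ G₀ := fun g hg => hg.1
  -- the canonical representation of elements of the affine stabilizer
  have hrep : ∀ σ : ↥(affGroup G₀ ⊓ permBlockStab B),
      ∃ gv : ((Fin d → ZMod p) ≃ₗ[ZMod p] (Fin d → ZMod p)) × (Fin d → ZMod p),
        gv.1 ∈ G₀ ∧ (σ : Equiv.Perm (Fin d → ZMod p)) = aff gv.1 gv.2 := by
    rintro ⟨σ, hσ⟩
    obtain ⟨g, hg, v, rfl⟩ := hσ.1
    exact ⟨(g, v), hg, rfl⟩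
  choose gv hgv hrepr using hrep
  have hmemJ : ∀ σ, (gv σ).1 ∈ J := by
    intro σ
    exact ⟨hgv σ, (gv σ).2, by rw [← hrepr σ]; exact σ.2.2⟩
  have hlinmul : ∀ σ τ, (gv (σ * τ)).1 = (gv σ).1 * (gv τ).1 := by
    intro σ τ
    have h1 : aff (gv (σ * τ)).1 (gv (σ * τ)).2
        = aff ((gv σ).1 * (gv τ).1) ((gv σ).1 (gv τ).2 + (gv σ).2) := by
      rw [← aff_mul, ← hrepr σ, ← hrepr τ, ← hrepr (σ * τ)]
      rfl
    exact (aff_inj h1).1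
  obtain ⟨φ, hφsur, hφker⟩ : ∃ φ : ↥(affGroup G₀ ⊓ permBlockStab B) →* ↥J,
      Function.Surjective φ ∧
      φ.ker = Subgroup.subgroupOf (affGroup ⊥ ⊓ permBlockStab B)
        (affGroup G₀ ⊓ permBlockStab B) := by
    refine ⟨MonoidHom.mk' (fun σ => ⟨(gv σ).1, hmemJ σ⟩)
      (fun σ τ => Subtype.ext (hlinmul σ τ)), ?_, ?_⟩
    · rintro ⟨g, hgJ⟩
      obtain ⟨hg, v, hv⟩ := hgJ
      refine ⟨⟨aff g v, ⟨g, hg, v, rfl⟩, hv⟩, ?_⟩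
      apply Subtype.ext
      exact (aff_inj (hrepr ⟨aff g v, ⟨g, hg, v, rfl⟩, hv⟩).symm).1
    · ext σ
      simp only [MonoidHom.mem_ker, Subgroup.mem_subgroupOf, Subgroup.mem_inf]
      constructor
      · intro h
        have h1 : (gv σ).1 = 1 := congrArg Subtype.val h
        refine ⟨⟨1, Subgroup.mem_bot.mpr rfl, (gv σ).2, ?_⟩, σ.2.2⟩
        rw [hrepr σ, h1]
      · rintro ⟨⟨g1, hg1, v, hv⟩, -⟩
        have h1 : aff (gv σ).1 (gv σ).2 = aff 1 v := by
          rw [← hrepr σ, hv, Subgroup.mem_bot.mp hg1]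
        exact Subtype.ext (aff_inj h1).1
  -- the embedding of G₀,B into J
  have hψmem : ∀ g : ↥(G₀ ⊓ linBlockStab B),
      (g : (Fin d → ZMod p) ≃ₗ[ZMod p] (Fin d → ZMod p)) ∈ J := by
    intro g
    have h2 := g.2
    rw [Subgroup.mem_inf] at h2
    refine ⟨h2.1, 0, ?_⟩
    show B.image ⇑(aff (g : (Fin d → ZMod p) ≃ₗ[ZMod p] (Fin d → ZMod p)) 0) = B
    have he : ⇑(aff (g : (Fin d → ZMod p) ≃ₗ[ZMod p] (Fin d → ZMod p)) 0)
        = ⇑(g : (Fin d → ZMod p) ≃ₗ[ZMod p] (Fin d → ZMod p)) := by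
      funext x; simp
    rw [he]
    exact h2.2
  -- cardinality of the point set
  have hVcard : Fintype.card (Fin d → ZMod p) = p ^ d := by
    simp [ZMod.card]
  have cardV : Nat.card (Fin d → ZMod p) = p ^ d := by
    rw [Nat.card_eq_fintype_card, hVcard]
  -- the smul of a subgroup element on a finset is image
  have hsmul : ∀ σ : ↥(affGroup G₀), ∀ C : Finset (Fin d → ZMod p),
      σ • C = C.image ⇑(σ : Equiv.Perm (Fin d → ZMod p)) := by
    intro σ C
    ext y
    simp only [Finset.mem_smul_finset, Finset.mem_image]
    rfl
  -- the orbit of B is 𝓑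
  have horbit : MulAction.orbit ↥(affGroup G₀) B = (𝓑 : Set (Finset (Fin d → ZMod p))) := by
    ext C
    constructor
    · rintro ⟨σ, rfl⟩
      obtain ⟨g, hg, v, hgv⟩ := σ.2
      show σ • B ∈ (𝓑 : Set (Finset (Fin d → ZMod p)))
      have h1 : σ • B = B.image (fun x => g x + v) := by
        rw [hsmul, hgv]; rfl
      rw [h1]
      exact hinv B hB g hg v
    · intro hC
      have hC' : C ∈ 𝓑 := hC
      have hCne : C.Nonempty := Finset.card_pos.mp (by rw [hk C hC']; omega)
      obtain ⟨y, hy⟩ := hCne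
      obtain ⟨g, hg, v, himg, -⟩ := hflag B hB C hC' 0 h0B y hy
      refine ⟨⟨aff g v, g, hg, v, rfl⟩, ?_⟩
      show (⟨aff g v, g, hg, v, rfl⟩ : ↥(affGroup G₀)) • B = C
      rw [hsmul]
      exact himg
  -- stabilizer has the same cardinality as G_B
  have hstabcard : Nat.card ↥(MulAction.stabilizer ↥(affGroup G₀) B)
      = Nat.card ↥(affGroup G₀ ⊓ permBlockStab B) := by
    apply Nat.card_eq_of_bijective (fun σ =>
      (⟨σ.1.1, Subgroup.mem_inf.mpr ⟨σ.1.2, by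
        have := σ.2
        rw [MulAction.mem_stabilizer_iff, hsmul] at this
        exact this⟩⟩ : ↥(affGroup G₀ ⊓ permBlockStab B)))
    constructor
    · intro a b hab
      have h2 := congrArg Subtype.val hab
      exact Subtype.ext (Subtype.ext h2)
    · rintro ⟨σ, hσ⟩
      rw [Subgroup.mem_inf] at hσ
      refine ⟨⟨⟨σ, hσ.1⟩, ?_⟩, rfl⟩
      rw [MulAction.mem_stabilizer_iff, hsmul]
      exact hσ.2
  -- orbit-stabilizer
  have horbstab : 𝓑.card * Nat.card ↥(affGroup G₀ ⊓ permBlockStab B)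
      = Nat.card ↥(affGroup G₀) := by
    have h1 := Nat.card_congr (MulAction.orbitProdStabilizerEquivGroup ↥(affGroup G₀) B)
    rw [Nat.card_prod] at h1
    rw [← h1, hstabcard]
    congr 1
    rw [horbit, Nat.card_coe_set_eq, Set.ncard_coe_finset]
  -- |G| = |G₀| * p^d
  have cardG : Nat.card ↥(affGroup G₀) = Nat.card ↥G₀ * p ^ d := by
    have hb : Function.Bijective (fun gv : ↥G₀ × (Fin d → ZMod p) =>
        (⟨aff gv.1 gv.2, gv.1, gv.1.2, gv.2, rfl⟩ : ↥(affGroup G₀))) := by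
      constructor
      · rintro ⟨g, v⟩ ⟨g', v'⟩ h
        have h2 := aff_inj (congrArg Subtype.val h)
        exact Prod.ext (Subtype.ext h2.1) h2.2
      · rintro ⟨σ, hσ⟩
        obtain ⟨g, hg, v, rfl⟩ := hσ
        exact ⟨(⟨g, hg⟩, v), rfl⟩
    calc Nat.card ↥(affGroup G₀) = Nat.card (↥G₀ × (Fin d → ZMod p)) :=
          (Nat.card_eq_of_bijective _ hb).symm
      _ = Nat.card ↥G₀ * p ^ d := by rw [Nat.card_prod, cardV]
  -- inclusion of translations
  have hT : affGroup (⊥ : Subgroup ((Fin d → ZMod p) ≃ₗ[ZMod p] (Fin d → ZMod p)))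
      ≤ affGroup G₀ := by
    rintro σ ⟨g, hg, v, rfl⟩
    exact ⟨g, (bot_le : ⊥ ≤ G₀) hg, v, rfl⟩
  have hTB : affGroup (⊥ : Subgroup ((Fin d → ZMod p) ≃ₗ[ZMod p] (Fin d → ZMod p)))
      ⊓ permBlockStab B ≤ affGroup G₀ ⊓ permBlockStab B := inf_le_inf_right _ hT
  -- index relation in G₀
  have hA : (J.subgroupOf G₀).index * Nat.card ↥J = Nat.card ↥G₀ := by
    have h1 := Subgroup.index_mul_card (J.subgroupOf G₀)
    rwa [Nat.card_congr (Subgroup.subgroupOfEquivOfLe hJle).toEquiv] at h1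
  -- |G_B| = |J| * |T_B|
  have hgb : Nat.card ↥(affGroup G₀ ⊓ permBlockStab B)
      = Nat.card ↥J * Nat.card ↥(affGroup (⊥ : Subgroup ((Fin d → ZMod p) ≃ₗ[ZMod p]
        (Fin d → ZMod p))) ⊓ permBlockStab B) := by
    have h1 := Subgroup.card_eq_card_quotient_mul_card_subgroup φ.ker
    rw [Nat.card_congr (QuotientGroup.quotientKerEquivOfSurjective φ hφsur).toEquiv,
      hφker, Nat.card_congr (Subgroup.subgroupOfEquivOfLe hTB).toEquiv] at h1
    exact h1
  -- double counting : b * k = p^d * r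
  have e5 : 𝓑.card * k = p ^ d * r := by
    have hdc := double_count 𝓑 (Finset.univ : Finset (Fin d → ZMod p)) (fun C x => x ∈ C)
    have hL : ∀ C ∈ 𝓑, ((Finset.univ : Finset (Fin d → ZMod p)).filter
        (fun x => x ∈ C)).card = k := by
      intro C hC
      have h1 : (Finset.univ : Finset (Fin d → ZMod p)).filter (fun x => x ∈ C) = C := by
        ext x; simp
      rw [h1]
      exact hk C hC
    rw [Finset.sum_congr rfl hL, Finset.sum_congr rfl (fun x _ => hr x),
      Finset.sum_const, Finset.sum_const, smul_eq_mul, smul_eq_mul,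
      Finset.card_univ, hVcard] at hdc
    exact hdc
  -- double counting : r * (k-1) = 2 * (p^d - 1)
  have e6 : r * (k - 1) = 2 * (p ^ d - 1) := by
    have hdc := double_count (𝓑.filter (fun C => (0 : Fin d → ZMod p) ∈ C))
      (Finset.univ.erase (0 : Fin d → ZMod p)) (fun C y => y ∈ C)
    have hL : ∀ C ∈ 𝓑.filter (fun C => (0 : Fin d → ZMod p) ∈ C),
        ((Finset.univ.erase (0 : Fin d → ZMod p)).filter (fun y => y ∈ C)).card = k - 1 := by
      intro C hC
      rw [Finset.mem_filter] at hC
      have h1 : (Finset.univ.erase (0 : Fin d → ZMod p)).filter (fun y => y ∈ C)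
          = C.erase 0 := by
        ext y
        simp only [Finset.mem_filter, Finset.mem_erase, Finset.mem_univ, and_true]
      rw [h1, Finset.card_erase_of_mem hC.2, hk C hC.1]
    have hR : ∀ y ∈ Finset.univ.erase (0 : Fin d → ZMod p),
        ((𝓑.filter (fun C => (0 : Fin d → ZMod p) ∈ C)).filter (fun C => y ∈ C)).card
          = 2 := by
      intro y hy
      rw [Finset.mem_erase] at hy
      rw [Finset.filter_filter]
      exact hlam 0 y (Ne.symm hy.1)
    rw [Finset.sum_congr rfl hL, Finset.sum_congr rfl hR,
      Finset.sum_const, Finset.sum_const, smul_eq_mul, smul_eq_mul, hr 0,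
      Finset.card_erase_of_mem (Finset.mem_univ _), Finset.card_univ, hVcard] at hdc
    rw [hdc, mul_comm]
  -- positivity
  have hbpos : 0 < 𝓑.card := Finset.card_pos.mpr ⟨B, hB⟩
  have hJpos : 0 < Nat.card ↥J := Nat.card_pos
  -- the index identity
  have hidx : (J.subgroupOf G₀).index * (k * (k - 1))
      = 2 * Nat.card ↥(affGroup (⊥ : Subgroup ((Fin d → ZMod p) ≃ₗ[ZMod p]
        (Fin d → ZMod p))) ⊓ permBlockStab B) * (p ^ d - 1) := by
    set i := (J.subgroupOf G₀).index
    set j := Nat.card ↥J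
    set t := Nat.card ↥(affGroup (⊥ : Subgroup ((Fin d → ZMod p) ≃ₗ[ZMod p]
      (Fin d → ZMod p))) ⊓ permBlockStab B)
    set b := 𝓑.card
    have key : i * (k * (k - 1)) * (j * b) = 2 * t * (p ^ d - 1) * (j * b) := by
      calc i * (k * (k - 1)) * (j * b) = ((i * j) * (b * k)) * (k - 1) := by ring
        _ = (Nat.card ↥G₀ * (p ^ d * r)) * (k - 1) := by rw [hA, e5]
        _ = (Nat.card ↥G₀ * p ^ d) * (r * (k - 1)) := by ring
        _ = Nat.card ↥(affGroup G₀) * (2 * (p ^ d - 1)) := by rw [← cardG, e6]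
        _ = (b * (j * t)) * (2 * (p ^ d - 1)) := by rw [← horbstab, hgb]
        _ = 2 * t * (p ^ d - 1) * (j * b) := by ring
    exact Nat.eq_of_mul_eq_mul_right (Nat.mul_pos hJpos hbpos) key
  refine ⟨J, hJle, ⟨φ, hφsur, hφker⟩, hidx, ?_⟩
  refine ⟨MonoidHom.mk' (fun g => ⟨(g : (Fin d → ZMod p) ≃ₗ[ZMod p] (Fin d → ZMod p)),
    hψmem g⟩) (fun a b => rfl), ?_⟩
  intro a b hab
  have h2 := congrArg Subtype.val hab
  exact Subtype.ext h2
end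

section
/- Let D be a nontrivial 2-(p^d,k,2) design with point set V = GF(p)^d admitting a flag-transitive automorphism group G = T ⋊ G_0 (T the translation group of V, G_0 ≤ GL_d(p) the stabilizer of 0), with even replication number r. Then one of the following holds: (1) T_B = 1 for every block B (T acts semiregularly on blocks) and k divides r; (2) some block has nontrivial stabilizer in T, and then either (a) k = p^t with t > 1 and every block of D is a coset of a t-dimensional GF(p)-subspace of V, or (b) p is odd and k = 2p^t for some t ≥ 1. -/
/-!
If the translations act semiregularly on blocks, every translation orbit of blocks has `p ^ d`
elements, so `p ^ d ∣ b`, and `b * k = p ^ d * r` gives `k ∣ r`.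

Otherwise translate a block `B` with nontrivial translation stabilizer `H = T_B` so that
`0 ∈ B`. The translates `-u + B` with `u ∈ B` all contain `0` and every `v ∈ H`, so by `λ = 2`
there are `m ≤ 2` of them; they correspond to the cosets of `H` in `B`, and `H` is an
`𝔽_p`-subspace of some dimension `t`, so `k = m * p ^ t`. If `m = 1` then `B = H` is a subspace,
and every block, being an affine image of `B`, is a coset of a `t`-dimensional subspace. It is
not a line: the linear images of a line `B` that contain `v ∈ B \ {0}` are all equal to `B`, so
`B` would be the only block through `0` and `v`. If `m = 2` then `B = H ∪ (a + H)`, and for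
`p = 2` this is stable under adding `a ∉ H`, which is absurd.
-/

open Finset Module
open scoped Pointwise

open MulAction in
@[to_additive]
theorem card_dvd_card_of_smul_mem_of_free {G α : Type*} [Group G] [Fintype G] [MulAction G α]
    [DecidableEq α] {s : Finset α} (hs : ∀ a ∈ s, ∀ g : G, g • a ∈ s)
    (hfree : ∀ a ∈ s, ∀ g : G, g • a = a → g = 1) : Fintype.card G ∣ #s := by
  classical
  rw [card_eq_sum_card_image (Quotient.mk (orbitRel G α)) s]
  refine dvd_sum fun o ho => ?_
  obtain ⟨a, ha, rfl⟩ := mem_image.1 ho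
  have horbit :
      {b ∈ s | Quotient.mk (orbitRel G α) b = ⟦a⟧} = (univ : Finset G).image (· • a) := by
    ext b
    simp only [mem_filter, mem_image, mem_univ, true_and, Quotient.eq, orbitRel_apply,
      mem_orbit_iff]
    exact ⟨fun ⟨_, g, hg⟩ => ⟨g, hg⟩, fun ⟨g, hg⟩ => ⟨hg ▸ hs a ha g, g, hg⟩⟩
  rw [horbit, card_image_of_injective _ fun g h hgh => ?_, card_univ]
  exact (inv_mul_eq_one.1 (hfree a ha (h⁻¹ * g) (by rw [mul_smul, hgh, inv_smul_smul]))).symm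

theorem card_mul_eq_card_mul_of_uniform {V : Type*} [Fintype V] [DecidableEq V]
    {𝓑 : Finset (Finset V)} {k r : ℕ} (hk : ∀ B ∈ 𝓑, #B = k)
    (hr : ∀ x : V, #{B ∈ 𝓑 | x ∈ B} = r) : #𝓑 * k = Fintype.card V * r :=
  card_mul_eq_card_mul (fun B x => x ∈ B) (t := univ)
    (fun B hB => by simpa [bipartiteAbove, filter_mem_eq_inter] using hk B hB)
    (fun x _ => hr x)

theorem dvd_of_vadd_mem_of_free {V : Type*} [AddGroup V] [Fintype V] [DecidableEq V]
    {𝓑 : Finset (Finset V)} {k r : ℕ} (htr : ∀ B ∈ 𝓑, ∀ v : V, v +ᵥ B ∈ 𝓑)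
    (hfree : ∀ B ∈ 𝓑, ∀ v : V, v +ᵥ B = B → v = 0) (hk : ∀ B ∈ 𝓑, #B = k)
    (hr : ∀ x : V, #{B ∈ 𝓑 | x ∈ B} = r) : k ∣ r := by
  obtain ⟨m, hm⟩ := card_dvd_card_of_vadd_mem_of_free htr hfree
  have hcount := card_mul_eq_card_mul_of_uniform hk hr
  rw [hm, mul_assoc] at hcount
  exact ⟨m, by rw [← Nat.eq_of_mul_eq_mul_left Fintype.card_pos hcount, mul_comm]⟩

open AddAction

section Translates

variable {V : Type*} [AddCommGroup V] [DecidableEq V]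

theorem image_add_right_eq_vadd_finset (B : Finset V) (v : V) : B.image (· + v) = v +ᵥ B := by
  simp only [vadd_finset_def, vadd_eq_add, add_comm]

def translatesThroughZero (B : Finset V) : Finset (Finset V) := B.image fun u : V => -u +ᵥ B

variable {B : Finset V}

theorem mem_of_mem_stabilizer (h0 : 0 ∈ B) {v : V} (hv : v ∈ stabilizer V B) : v ∈ B := by
  simpa using mem_stabilizer_finset'.1 hv h0

theorem neg_vadd_eq_neg_vadd_iff {x u : V} : -x +ᵥ B = -u +ᵥ B ↔ x - u ∈ stabilizer V B := by
  rw [mem_stabilizer_iff, neg_vadd_eq_iff, vadd_vadd, ← sub_eq_add_neg, eq_comm]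

theorem neg_vadd_eq_self_iff {x : V} : -x +ᵥ B = B ↔ x ∈ stabilizer V B := by
  rw [mem_stabilizer_iff, neg_vadd_eq_iff, eq_comm]

theorem card_translatesThroughZero_mul_natCard_stabilizer :
    #(translatesThroughZero B) * Nat.card (stabilizer V B) = #B := by
  rw [card_eq_sum_card_image (fun u : V => -u +ᵥ B) B, translatesThroughZero, sum_const_nat]
  intro C hC
  obtain ⟨u, hu, rfl⟩ := mem_image.1 hC
  have hfiber : (({x ∈ B | -x +ᵥ B = -u +ᵥ B} : Finset V) : Set V) =
      u +ᵥ (stabilizer V B : Set V) := by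
    ext x
    rw [coe_filter, Set.mem_ofPred_eq, Set.mem_vadd_set_iff_neg_vadd_mem, neg_vadd_eq_neg_vadd_iff,
      vadd_eq_add, neg_add_eq_sub]
    refine ⟨And.right, fun hx => ⟨?_, hx⟩⟩
    simpa using mem_stabilizer_finset'.1 hx hu
  rw [← Set.ncard_coe_finset, hfiber, Set.ncard_vadd_set]
  exact (Nat.card_coe_set_eq _).symm

theorem translatesThroughZero_subset {𝓑 : Finset (Finset V)} (htr : ∀ v : V, v +ᵥ B ∈ 𝓑) {v : V}
    (hv : v ∈ stabilizer V B) : translatesThroughZero B ⊆ {C ∈ 𝓑 | 0 ∈ C ∧ v ∈ C} := by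
  intro C hC
  obtain ⟨u, hu, rfl⟩ := mem_image.1 hC
  refine mem_filter.2 ⟨htr _, ?_, ?_⟩ <;> rw [mem_neg_vadd_finset_iff, vadd_eq_add]
  · rwa [add_zero]
  · rw [add_comm]
    exact mem_stabilizer_finset'.1 hv hu

theorem neg_vadd_mem_translatesThroughZero {u : V} (hu : u ∈ B) :
    -u +ᵥ B ∈ translatesThroughZero B :=
  mem_image_of_mem _ hu

theorem self_mem_translatesThroughZero (h0 : 0 ∈ B) : B ∈ translatesThroughZero B := by
  simpa using neg_vadd_mem_translatesThroughZero h0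

theorem coe_eq_stabilizer_of_card_translatesThroughZero_eq_one (h0 : 0 ∈ B)
    (h1 : #(translatesThroughZero B) = 1) : (B : Set V) = stabilizer V B :=
  Set.Subset.antisymm
    (fun _ hx => neg_vadd_eq_self_iff.1 <| card_le_one.1 h1.le _
      (neg_vadd_mem_translatesThroughZero hx) _ (self_mem_translatesThroughZero h0))
    fun _ => mem_of_mem_stabilizer h0

theorem card_translatesThroughZero_ne_two [Module (ZMod 2) V] (h0 : 0 ∈ B) :
    #(translatesThroughZero B) ≠ 2 := by
  intro h2
  obtain ⟨_, ha', haB⟩ := exists_mem_ne (one_lt_two.trans_eq h2.symm) B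
  obtain ⟨a, ha, rfl⟩ := mem_image.1 ha'
  have hcases : ∀ x ∈ B, x ∈ stabilizer V B ∨ x - a ∈ stabilizer V B := by
    intro x hx
    by_contra! hx'
    rw [← neg_vadd_eq_self_iff, ← neg_vadd_eq_neg_vadd_iff] at hx'
    exact (two_lt_card.2 ⟨B, self_mem_translatesThroughZero h0, _, ha', _,
      neg_vadd_mem_translatesThroughZero hx, haB.symm, Ne.symm hx'.1, Ne.symm hx'.2⟩).ne' h2
  -- `B = H ∪ (a + H)` is closed under `+ a`, because `x + a = x - a` in characteristic 2.
  refine haB (neg_vadd_eq_self_iff.2 (mem_stabilizer_finset'.2 fun x hx => ?_))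
  rw [vadd_eq_add, add_comm]
  rcases hcases x hx with hxH | hxaH
  · exact mem_stabilizer_finset'.1 hxH ha
  · rw [← ZModModule.sub_eq_add]
    exact mem_of_mem_stabilizer h0 hxaH

end Translates

theorem Finset.image_eq_self_of_coe_eq_of_finrank_eq_one {K V : Type*} [Field K] [AddCommGroup V]
    [Module K V] [DecidableEq V] {B : Finset V} {W : Submodule K V} (hBW : (B : Set V) = W)
    (hW : finrank K W = 1) (g : V ≃ₗ[K] V) {v : V} (hv0 : v ≠ 0) (hv : v ∈ B)
    (hgv : v ∈ B.image g) : B.image g = B := by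
  have hgBW : ((B.image g : Finset V) : Set V) = W.map (g : V →ₗ[K] V) := by
    rw [coe_image, hBW, Submodule.map_coe, LinearEquiv.coe_coe]
  have hspan (S : Submodule K V) (hS : finrank K S = 1) (hvS : v ∈ S) : S = K ∙ v :=
    eq_span_singleton_of_mem_of_finrank_eq_one hS hvS hv0
  apply coe_injective
  rw [hgBW, hBW, hspan _ ((LinearEquiv.finrank_map_eq g W).trans hW)
    (by rw [← SetLike.mem_coe, ← hgBW, mem_coe]; exact hgv),
    hspan W hW (by rw [← SetLike.mem_coe, ← hBW, mem_coe]; exact hv)]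

section Designs

variable {p : ℕ} [Fact p.Prime] {V : Type*} [AddCommGroup V] [Module (ZMod p) V] [Fintype V]
  [DecidableEq V] {B : Finset V} {v : V}

variable (p) in
theorem natCard_stabilizer_eq_pow_finrank (B : Finset V) :
    Nat.card (stabilizer V B) =
      p ^ finrank (ZMod p) (AddSubgroup.toZModSubmodule p (stabilizer V B)) :=
  (FiniteField.pow_finrank_eq_natCard p _).symm

variable (p) in
theorem finrank_stabilizer_pos (hv : v ∈ stabilizer V B) (hv0 : v ≠ 0) :
    0 < finrank (ZMod p) (AddSubgroup.toZModSubmodule p (stabilizer V B)) :=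
  finrank_pos_iff_exists_ne_zero.2 ⟨⟨v, hv⟩, Subtype.coe_ne_coe.1 hv0⟩

theorem exists_coset_of_card_translatesThroughZero_eq_one {𝓑 : Finset (Finset V)}
    (h0 : 0 ∈ B) (hv : v ∈ stabilizer V B) (hv0 : v ≠ 0) (hlam : #{C ∈ 𝓑 | 0 ∈ C ∧ v ∈ C} = 2)
    (hflag : ∀ C ∈ 𝓑, ∀ y ∈ C, ∃ g : V ≃ₗ[ZMod p] V, ∃ u : V,
      B.image (fun z => g z + u) = C ∧ g 0 + u = y)
    (hne : ∀ C ∈ 𝓑, C.Nonempty) (h1 : #(translatesThroughZero B) = 1) :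
    ∃ t : ℕ, 1 < t ∧ #B = p ^ t ∧ ∀ C ∈ 𝓑, ∃ (W : Submodule (ZMod p) V) (u : V),
      finrank (ZMod p) W = t ∧ (C : Set V) = (· + u) '' W := by
  set W := AddSubgroup.toZModSubmodule p (stabilizer V B)
  have hBW : (B : Set V) = W := coe_eq_stabilizer_of_card_translatesThroughZero_eq_one h0 h1
  have hW1 : finrank (ZMod p) W ≠ 1 := by
    intro hW1
    have hunique : {C ∈ 𝓑 | 0 ∈ C ∧ v ∈ C} ⊆ {B} := by
      intro C hC
      obtain ⟨hC, h0C, hvC⟩ := mem_filter.1 hC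
      obtain ⟨g, u, rfl, hu⟩ := hflag C hC 0 h0C
      rw [map_zero, zero_add] at hu
      subst hu
      simp only [add_zero] at hvC ⊢
      exact mem_singleton.2 (image_eq_self_of_coe_eq_of_finrank_eq_one hBW hW1 g hv0
        (mem_of_mem_stabilizer h0 hv) hvC)
    simpa [hlam] using card_le_card hunique
  refine ⟨finrank (ZMod p) W, ?_, ?_, fun C hC => ?_⟩
  · exact lt_of_le_of_ne (finrank_stabilizer_pos p hv hv0) (Ne.symm hW1)
  · rw [← card_translatesThroughZero_mul_natCard_stabilizer, h1, one_mul,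
      natCard_stabilizer_eq_pow_finrank p]
  · obtain ⟨y, hy⟩ := hne C hC
    obtain ⟨g, u, rfl, -⟩ := hflag C hC y hy
    refine ⟨W.map (g : V →ₗ[ZMod p] V), u, LinearEquiv.finrank_map_eq g W, ?_⟩
    rw [coe_image, ← Set.image_image (· + u), hBW, Submodule.map_coe, LinearEquiv.coe_coe]

theorem odd_of_card_translatesThroughZero_eq_two (h0 : 0 ∈ B) (hv : v ∈ stabilizer V B)
    (hv0 : v ≠ 0) (h2 : #(translatesThroughZero B) = 2) :
    Odd p ∧ ∃ t : ℕ, 1 ≤ t ∧ #B = 2 * p ^ t := by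
  refine ⟨(Fact.out : p.Prime).odd_of_ne_two ?_, _, finrank_stabilizer_pos p hv hv0, ?_⟩
  · rintro rfl
    exact card_translatesThroughZero_ne_two h0 h2
  · rw [← card_translatesThroughZero_mul_natCard_stabilizer, h2,
      natCard_stabilizer_eq_pow_finrank p]

end Designs

theorem stmt_3_general (p d k r : ℕ) [Fact p.Prime]
    (𝓑 : Finset (Finset (Fin d → ZMod p)))
    (G₀ : Subgroup ((Fin d → ZMod p) ≃ₗ[ZMod p] (Fin d → ZMod p)))
    (hk : ∀ B ∈ 𝓑, B.card = k)
    (hlam : ∀ x y : Fin d → ZMod p, x ≠ y →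
      (𝓑.filter (fun B => x ∈ B ∧ y ∈ B)).card = 2)
    (hr : ∀ x : Fin d → ZMod p, (𝓑.filter (fun B => x ∈ B)).card = r)
    (hk2 : 2 < k)
    (hinv : ∀ B ∈ 𝓑, ∀ g ∈ G₀, ∀ v : Fin d → ZMod p,
      B.image (fun x => g x + v) ∈ 𝓑)
    (hflag : ∀ B ∈ 𝓑, ∀ C ∈ 𝓑, ∀ x ∈ B, ∀ y ∈ C,
      ∃ g ∈ G₀, ∃ v : Fin d → ZMod p,
        B.image (fun z => g z + v) = C ∧ g x + v = y) :
    ((∀ B ∈ 𝓑, ∀ v : Fin d → ZMod p, B.image (fun x => x + v) = B → v = 0) ∧ k ∣ r) ∨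
    ((∃ B ∈ 𝓑, ∃ v : Fin d → ZMod p, v ≠ 0 ∧ B.image (fun x => x + v) = B) ∧
      ((∃ t : ℕ, 1 < t ∧ k = p ^ t ∧
          ∀ B ∈ 𝓑, ∃ (W : Submodule (ZMod p) (Fin d → ZMod p)) (u : Fin d → ZMod p),
            Module.finrank (ZMod p) W = t ∧
            (↑B : Set (Fin d → ZMod p)) = (fun x => x + u) '' (W : Set (Fin d → ZMod p))) ∨
        (Odd p ∧ ∃ t : ℕ, 1 ≤ t ∧ k = 2 * p ^ t))) := by
  simp only [image_add_right_eq_vadd_finset]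
  have htr : ∀ B ∈ 𝓑, ∀ v : Fin d → ZMod p, v +ᵥ B ∈ 𝓑 := fun B hB v => by
    simpa only [LinearEquiv.coe_one, id_eq, image_add_right_eq_vadd_finset] using
      hinv B hB 1 G₀.one_mem v
  by_cases hfree : ∀ B ∈ 𝓑, ∀ v : Fin d → ZMod p, v +ᵥ B = B → v = 0
  · exact Or.inl ⟨hfree, dvd_of_vadd_mem_of_free htr hfree hk hr⟩
  refine Or.inr ⟨by simpa [and_comm] using hfree, ?_⟩
  obtain ⟨B₀, hB₀, v, hvB₀, hv0⟩ : ∃ B ∈ 𝓑, ∃ v : Fin d → ZMod p, v +ᵥ B = B ∧ v ≠ 0 := by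
    simpa using hfree
  have hne : ∀ C ∈ 𝓑, C.Nonempty := fun C hC => card_pos.1 (by rw [hk C hC]; omega)
  obtain ⟨x, hx⟩ := hne B₀ hB₀
  set B := -x +ᵥ B₀
  have hB : B ∈ 𝓑 := htr B₀ hB₀ (-x)
  have h0 : 0 ∈ B := by simpa using vadd_mem_vadd_finset (a := -x) hx
  have hv : v ∈ stabilizer _ B := by rwa [stabilizer_vadd_eq_right, mem_stabilizer_iff]
  have hle : #(translatesThroughZero B) ≤ 2 :=
    (card_le_card (translatesThroughZero_subset (htr B hB) hv)).trans (hlam 0 v hv0.symm).le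
  have hpos : 0 < #(translatesThroughZero B) := ((hne B hB).image _).card_pos
  rw [← hk B hB]
  interval_cases hm : #(translatesThroughZero B)
  · exact Or.inl (exists_coset_of_card_translatesThroughZero_eq_one h0 hv hv0 (hlam 0 v hv0.symm)
      (fun C hC y hy => let ⟨g, _, u, h⟩ := hflag B hB C hC 0 h0 y hy; ⟨g, u, h⟩) hne hm)
  · exact Or.inr (odd_of_card_translatesThroughZero_eq_two h0 hv hv0 hm)

/-- Let `D` be a nontrivial 2-(p^d,k,2) design with point set `V = GF(p)^d`
admitting a flag-transitive automorphism group `G = T ⋊ G₀` with even replication number `r`.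
Then either `T` acts semiregularly on blocks and `k ∣ r`, or some block has nontrivial
translation stabilizer and either `k = p^t` (`t > 1`) with every block a coset of a
`t`-dimensional subspace, or `p` is odd and `k = 2·p^t` with `t ≥ 1`. -/
theorem stmt_3 (p d k r : ℕ) [Fact p.Prime]
    (𝓑 : Finset (Finset (Fin d → ZMod p)))
    (G₀ : Subgroup ((Fin d → ZMod p) ≃ₗ[ZMod p] (Fin d → ZMod p)))
    (hk : ∀ B ∈ 𝓑, B.card = k)
    (hlam : ∀ x y : Fin d → ZMod p, x ≠ y →
      (𝓑.filter (fun B => x ∈ B ∧ y ∈ B)).card = 2)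
    (hr : ∀ x : Fin d → ZMod p, (𝓑.filter (fun B => x ∈ B)).card = r)
    (hk2 : 2 < k) (hkv : k < p ^ d)
    (hinv : ∀ B ∈ 𝓑, ∀ g ∈ G₀, ∀ v : Fin d → ZMod p,
      B.image (fun x => g x + v) ∈ 𝓑)
    (hflag : ∀ B ∈ 𝓑, ∀ C ∈ 𝓑, ∀ x ∈ B, ∀ y ∈ C,
      ∃ g ∈ G₀, ∃ v : Fin d → ZMod p,
        B.image (fun z => g z + v) = C ∧ g x + v = y)
    (hreven : Even r) :
    ((∀ B ∈ 𝓑, ∀ v : Fin d → ZMod p, B.image (fun x => x + v) = B → v = 0) ∧ k ∣ r) ∨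
    ((∃ B ∈ 𝓑, ∃ v : Fin d → ZMod p, v ≠ 0 ∧ B.image (fun x => x + v) = B) ∧
      ((∃ t : ℕ, 1 < t ∧ k = p ^ t ∧
          ∀ B ∈ 𝓑, ∃ (W : Submodule (ZMod p) (Fin d → ZMod p)) (u : Fin d → ZMod p),
            Module.finrank (ZMod p) W = t ∧
            (↑B : Set (Fin d → ZMod p)) = (fun x => x + u) '' (W : Set (Fin d → ZMod p))) ∨
        (Odd p ∧ ∃ t : ℕ, 1 ≤ t ∧ k = 2 * p ^ t))) :=
  stmt_3_general p d k r 𝓑 G₀ hk hlam hr hk2 hinv hflag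
end

section
/- Let D be a nontrivial 2-(p^d,k,2) design with point set the finite field F = GF(p^d), admitting the one-dimensional affine group AGL_1(p^d) = {x ↦ ax + b : a ∈ F*, b ∈ F} as a flag-transitive automorphism group. Then p^d ≡ 1 (mod 3), k = 3, and the blocks of D are exactly the sets aH + b with a ∈ F* and b ∈ F, where H is the unique subgroup of order 3 of the multiplicative group F*. -/
/-!
Fix a block `B` through `0` and let `S ≤ F*` be its multiplicative stabiliser. The blocks through
`0` form the `F*`-orbit of `B`, so counting the blocks through `0` in two ways gives
`k = 2|S| + 1`. The translations fixing `B` form an additive group `T ⊆ B` on which `S` acts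
freely, so `|T| > k / 2` unless `T = 0`; then `T = B`, and `B` is a vector space over its field
of multipliers, whose nonzero elements are `S`, so `|B|` is a power of `|S| + 1`, which
`2|S| + 1` is not. Hence `T = 0`. Conjugating a symmetry of `B` fixing a point of `B` by one
moving that point then produces a translation, so such symmetries are trivial: `S = 1`, `k = 3`,
and the symmetry `x ↦ c x + u` taking `0` to `u ∈ B` is a 3-cycle on `B`, which forces
`c² + c + 1 = 0`. So `B` is an affine image of the cube roots of unity `{1, c, c²}`, and by
flag-transitivity so is every block.
-/

open Finset Pointwise MulAction

theorem Finset.card_filter_mem_mul_card_sub_one {α : Type*} [Fintype α] [DecidableEq α]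
    (𝓑 : Finset (Finset α)) {k l : ℕ} (x : α) (hk : ∀ B ∈ 𝓑, #B = k)
    (hl : ∀ y, y ≠ x → #{B ∈ 𝓑 | x ∈ B ∧ y ∈ B} = l) :
    #{B ∈ 𝓑 | x ∈ B} * (k - 1) = l * (Fintype.card α - 1) := by
  have hcount := sum_card_bipartiteAbove_eq_sum_card_bipartiteBelow (fun B y => y ∈ B)
    (s := {B ∈ 𝓑 | x ∈ B}) (t := univ.erase x)
  have habove : ∀ B ∈ {B ∈ 𝓑 | x ∈ B},
      #((univ.erase x).bipartiteAbove (fun B y => y ∈ B) B) = k - 1 := by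
    intro B hB
    rw [mem_filter] at hB
    rw [← hk B hB.1, ← card_erase_of_mem hB.2]
    congr 1
    ext y
    simp [and_comm]
  have hbelow : ∀ y ∈ univ.erase x,
      #({B ∈ 𝓑 | x ∈ B}.bipartiteBelow (fun B y => y ∈ B) y) = l := by
    intro y hy
    rw [bipartiteBelow, filter_filter]
    exact hl y (ne_of_mem_erase hy)
  rw [sum_congr rfl habove, sum_congr rfl hbelow, sum_const, sum_const,
    card_erase_of_mem (mem_univ x), card_univ] at hcount
  simpa [mul_comm] using hcount

theorem Finset.image_eq_self_of_leftInverse {α : Type*} [DecidableEq α] {B : Finset α}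
    {f g : α → α} (hf : B.image f = B) (hgf : Function.LeftInverse g f) : B.image g = B := by
  conv_lhs => rw [← hf]
  rw [image_image, hgf.comp_eq_id, image_id]

namespace AddSubgroup

variable {F : Type*} [Field F] [Finite F] (H : AddSubgroup F)

def multiplierField : Subfield F where
  carrier := {a | ∀ h ∈ H, a * h ∈ H}
  zero_mem' h _ := by simp
  one_mem' h hh := by simpa using hh
  add_mem' ha hb h hh := by rw [add_mul]; exact H.add_mem (ha h hh) (hb h hh)
  mul_mem' ha hb h hh := by rw [mul_assoc]; exact ha _ (hb h hh)
  neg_mem' ha h hh := by rw [neg_mul]; exact H.neg_mem (ha h hh)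
  inv_mem' a ha h hh := by
    rcases eq_or_ne a 0 with rfl | ha0
    · simp
    let f : H → H := fun x => ⟨a * x, ha x x.2⟩
    have hf : f.Injective := fun x y hxy =>
      Subtype.ext (mul_left_cancel₀ ha0 (congrArg Subtype.val hxy))
    obtain ⟨x, hx⟩ := Finite.surjective_of_injective hf ⟨h, hh⟩
    have hx : a * x = h := congrArg Subtype.val hx
    rw [← hx, inv_mul_cancel_left₀ ha0]
    exact x.2

def toMultiplierSubmodule : Submodule H.multiplierField F where
  carrier := H
  add_mem' := H.add_mem
  zero_mem' := H.zero_mem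
  smul_mem' c _ hx := c.2 _ hx

theorem range_unitsMap_multiplierField :
    (Units.map (H.multiplierField.subtype : H.multiplierField →* F)).range =
      stabilizer Fˣ (H : Set F) := by
  ext u
  simp only [MonoidHom.mem_range, mem_stabilizer_set, Units.smul_def, smul_eq_mul,
    SetLike.mem_coe]
  constructor
  · rintro ⟨v, rfl⟩ h
    refine ⟨fun hvh => ?_, fun hh => v.1.2 h hh⟩
    simpa using (v⁻¹).1.2 _ hvh
  · intro hu
    have hmem : (u : F) ∈ H.multiplierField := fun h hh => (hu h).2 hh
    exact ⟨Units.mk0 ⟨u, hmem⟩ (fun h => u.ne_zero congr($h.1)), Units.ext rfl⟩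

theorem card_multiplierField :
    Nat.card H.multiplierField = Nat.card (stabilizer Fˣ (H : Set F)) + 1 := by
  rw [← range_unitsMap_multiplierField, Nat.card_eq_card_units_add_one H.multiplierField]
  exact congrArg (· + 1) (Nat.card_congr (MonoidHom.ofInjective
    (Units.map_injective H.multiplierField.subtype_injective)).toEquiv)

theorem card_ne_two_mul_card_stabilizer_add_one :
    Nat.card H ≠ 2 * Nat.card (stabilizer Fˣ (H : Set F)) + 1 := by
  have hs : 0 < Nat.card (stabilizer Fˣ (H : Set F)) := Nat.card_pos
  have hcard : Nat.card H.toMultiplierSubmodule = (Nat.card (stabilizer Fˣ (H : Set F)) + 1) ^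
      Module.finrank H.multiplierField H.toMultiplierSubmodule := by
    rw [← card_multiplierField]
    exact Module.natCard_eq_pow_finrank
  change Nat.card H.toMultiplierSubmodule ≠ _
  rw [hcard]
  generalize Nat.card (stabilizer Fˣ (H : Set F)) = s at hs ⊢
  rcases Module.finrank H.multiplierField H.toMultiplierSubmodule with _ | _ | n
  · rw [pow_zero]; omega
  · rw [pow_one]; omega
  · have := Nat.pow_le_pow_right (Nat.succ_pos s) (show 2 ≤ n + 2 by omega)
    nlinarith

end AddSubgroup

section CubeRoots

variable {F : Type*} [Field F]

theorem setOf_pow_three_eq_one {c : F} (hc : c ^ 2 + c + 1 = 0) :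
    {x : F | x ^ 3 = 1} = {1, c, c ^ 2} := by
  ext x
  have : x ^ 3 - 1 = (x - 1) * (x - c) * (x - c ^ 2) := by
    linear_combination (x ^ 2 - c * x + c - 1) * hc
  simp only [Set.mem_ofPred_eq, Set.mem_insert_iff, Set.mem_singleton_iff]
  rw [← sub_eq_zero, this, mul_eq_zero, mul_eq_zero, sub_eq_zero, sub_eq_zero, sub_eq_zero,
    or_assoc]

theorem card_mod_three_eq_one [Fintype F] {c : F} (hc1 : c ≠ 1) (hc : c ^ 2 + c + 1 = 0) :
    Fintype.card F % 3 = 1 := by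
  have hc0 : c ≠ 0 := by rintro rfl; simp at hc
  have hord : orderOf (Units.mk0 c hc0) = 3 := by
    apply orderOf_eq_prime
    · ext
      simp only [Units.val_pow_eq_pow_val, Units.val_mk0, Units.val_one]
      linear_combination (c - 1) * hc
    · exact fun h => hc1 (by simpa using congrArg Units.val h)
  have hdvd := orderOf_dvd_natCard (Units.mk0 c hc0)
  rw [hord, Nat.card_units, Nat.card_eq_fintype_card] at hdvd
  have := Fintype.card_pos (α := F)
  omega

end CubeRoots

section AffineDesigns

variable {F : Type*} [Field F] [DecidableEq F]

def IsAffineInvariant (𝓑 : Finset (Finset F)) : Prop :=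
  ∀ B ∈ 𝓑, ∀ a b : F, a ≠ 0 → B.image (fun x => a * x + b) ∈ 𝓑

def IsAffineFlagTransitive (𝓑 : Finset (Finset F)) : Prop :=
  ∀ B ∈ 𝓑, ∀ C ∈ 𝓑, ∀ x ∈ B, ∀ y ∈ C,
    ∃ a b : F, a ≠ 0 ∧ B.image (fun z => a * z + b) = C ∧ a * x + b = y

def IsAffineTransitive (B : Finset F) : Prop :=
  ∀ x ∈ B, ∀ y ∈ B, ∃ a b : F, a ≠ 0 ∧ B.image (fun z => a * z + b) = B ∧ a * x + b = y

theorem units_smul_finset_eq_image (u : Fˣ) (B : Finset F) :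
    u • B = B.image (fun x => (u : F) * x + 0) := by
  simp [smul_finset_def, Units.smul_def]

theorem vadd_finset_eq_image (w : F) (B : Finset F) :
    w +ᵥ B = B.image (fun x => 1 * x + w) := by
  simp [vadd_finset_def, add_comm]

theorem image_inv_affine_eq_self {B : Finset F} {a b : F} (ha : a ≠ 0)
    (h : B.image (fun z => a * z + b) = B) : B.image (fun z => a⁻¹ * (z - b)) = B :=
  image_eq_self_of_leftInverse h fun z => by field_simp; ring

section BlocksThroughZero

variable {𝓑 : Finset (Finset F)} {B : Finset F}

theorem orbit_units_eq_filter_zero_mem (hinv : IsAffineInvariant 𝓑)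
    (hflag : IsAffineFlagTransitive 𝓑) (hB : B ∈ 𝓑) (h0 : (0 : F) ∈ B) :
    orbit Fˣ B = ↑{C ∈ 𝓑 | (0 : F) ∈ C} := by
  ext C
  simp only [mem_orbit_iff, coe_filter, Set.mem_ofPred_eq]
  constructor
  · rintro ⟨u, rfl⟩
    rw [units_smul_finset_eq_image]
    exact ⟨hinv B hB _ _ u.ne_zero, mem_image.2 ⟨0, h0, by simp⟩⟩
  · rintro ⟨hC, h0C⟩
    obtain ⟨a, b, ha, rfl, hb⟩ := hflag B hB C hC 0 h0 0 h0C
    obtain rfl : b = 0 := by simpa using hb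
    exact ⟨Units.mk0 a ha, units_smul_finset_eq_image _ _⟩

theorem card_filter_zero_mem_mul_card_stabilizer [Fintype F] (hinv : IsAffineInvariant 𝓑)
    (hflag : IsAffineFlagTransitive 𝓑) (hB : B ∈ 𝓑) (h0 : (0 : F) ∈ B) :
    #{C ∈ 𝓑 | (0 : F) ∈ C} * Nat.card (stabilizer Fˣ B) = Fintype.card F - 1 := by
  have := Nat.card_congr (orbitProdStabilizerEquivGroup Fˣ B)
  rwa [Nat.card_prod, orbit_units_eq_filter_zero_mem hinv hflag hB h0, Finset.coe_sort_coe,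
    Nat.card_eq_finsetCard, Nat.card_units, Nat.card_eq_fintype_card (α := F)] at this

theorem card_eq_two_mul_card_stabilizer_add_one [Fintype F] {k : ℕ} (hk : ∀ B ∈ 𝓑, #B = k)
    (hlam : ∀ x y : F, x ≠ y → #{B ∈ 𝓑 | x ∈ B ∧ y ∈ B} = 2) (hinv : IsAffineInvariant 𝓑)
    (hflag : IsAffineFlagTransitive 𝓑) (hB : B ∈ 𝓑) (h0 : (0 : F) ∈ B) :
    k = 2 * Nat.card (stabilizer Fˣ B) + 1 := by
  have hr : 0 < #{C ∈ 𝓑 | (0 : F) ∈ C} := card_pos.2 ⟨B, mem_filter.2 ⟨hB, h0⟩⟩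
  have hk1 : 1 ≤ k := hk B hB ▸ card_pos.2 ⟨0, h0⟩
  have hcount := card_filter_mem_mul_card_sub_one 𝓑 0 hk fun y hy => hlam 0 y hy.symm
  rw [← card_filter_zero_mem_mul_card_stabilizer hinv hflag hB h0, mul_left_comm] at hcount
  have := Nat.eq_of_mul_eq_mul_left hr hcount
  omega

end BlocksThroughZero

section Translations

variable {B : Finset F}

theorem mem_of_mem_addStabilizer (h0 : (0 : F) ∈ B) {w : F}
    (hw : w ∈ AddAction.stabilizer F B) : w ∈ B := by
  simpa using (AddAction.mem_stabilizer_finset.1 hw 0).2 h0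

theorem units_smul_mem_addStabilizer {u : Fˣ} (hu : u ∈ stabilizer Fˣ B) {w : F}
    (hw : w ∈ AddAction.stabilizer F B) : u • w ∈ AddAction.stabilizer F B := by
  rw [AddAction.mem_stabilizer_finset] at hw ⊢
  rw [mem_stabilizer_finset] at hu
  intro b
  have : u • w +ᵥ b = u • (w +ᵥ u⁻¹ • b) := by simp [smul_add]
  rw [this, hu, hw, ← hu, smul_inv_smul]

theorem card_stabilizer_add_one_le_card_addStabilizer [Finite F]
    (hT : AddAction.stabilizer F B ≠ ⊥) :
    Nat.card (stabilizer Fˣ B) + 1 ≤ Nat.card (AddAction.stabilizer F B) := by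
  obtain ⟨⟨w, hw⟩, hw0⟩ := AddSubgroup.ne_bot_iff_exists_ne_zero.1 hT
  have hw0 : w ≠ 0 := by simpa using hw0
  let f : Option (stabilizer Fˣ B) → AddAction.stabilizer F B
    | none => 0
    | some u => ⟨(u : Fˣ) • w, units_smul_mem_addStabilizer u.2 hw⟩
  have hf : f.Injective := by
    rintro (_ | u) (_ | v) h <;> simp only [f, Subtype.ext_iff, AddSubgroup.coe_zero] at h
    · rfl
    · exact absurd h.symm (smul_ne_zero v.1.ne_zero hw0)
    · exact absurd h (smul_ne_zero u.1.ne_zero hw0)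
    · rw [Units.smul_def, Units.smul_def, smul_eq_mul, smul_eq_mul] at h
      exact congrArg some (Subtype.ext (Units.ext (mul_right_cancel₀ hw0 h)))
  simpa using Nat.card_le_card_of_injective f hf

theorem two_mul_card_addStabilizer_le {b : F} (hb : b ∈ B)
    (hbT : b ∉ AddAction.stabilizer F B) (h0 : (0 : F) ∈ B) :
    2 * Nat.card (AddAction.stabilizer F B) ≤ #B := by
  let f : AddAction.stabilizer F B ⊕ AddAction.stabilizer F B → B
    | .inl w => ⟨w, mem_of_mem_addStabilizer h0 w.2⟩
    | .inr w => ⟨w + b, (AddAction.mem_stabilizer_finset.1 w.2 b).2 hb⟩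
  have hf : f.Injective := by
    rintro (w | w) (w' | w') h <;> simp only [f, Subtype.mk.injEq] at h
    · exact congrArg _ (Subtype.ext h)
    · exact absurd (by rw [h]; simp : b = w - w') (fun h' => hbT (h' ▸ sub_mem w.2 w'.2))
    · exact absurd (by rw [← h]; simp : b = w' - w) (fun h' => hbT (h' ▸ sub_mem w'.2 w.2))
    · exact congrArg _ (Subtype.ext (add_right_cancel h))
  have : Finite (AddAction.stabilizer F B) := .of_injective _ (hf.comp Sum.inl_injective)
  have := Nat.card_le_card_of_injective f hf
  rwa [Nat.card_sum, Nat.card_eq_finsetCard, ← two_mul] at this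

theorem addStabilizer_eq_bot [Finite F] (h0 : (0 : F) ∈ B)
    (hk : #B = 2 * Nat.card (stabilizer Fˣ B) + 1) : AddAction.stabilizer F B = ⊥ := by
  by_contra hT
  have hle := card_stabilizer_add_one_le_card_addStabilizer hT
  have hBT : (B : Set F) = AddAction.stabilizer F B := by
    refine Set.Subset.antisymm (fun b hb => ?_) (fun w hw => mem_of_mem_addStabilizer h0 hw)
    by_contra hbT
    have := two_mul_card_addStabilizer_le hb hbT h0
    omega
  apply (AddAction.stabilizer F B).card_ne_two_mul_card_stabilizer_add_one
  rw [← hBT, stabilizer_coe_finset, ← hk, ← Nat.card_eq_finsetCard]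
  exact Nat.card_congr (Equiv.setCongr hBT).symm

end Translations

section PointStabilizers

variable {B : Finset F}

theorem eq_one_of_image_eq_self_of_fixed (hT : AddAction.stabilizer F B = ⊥)
    (htrans : IsAffineTransitive B) (hB : 1 < #B) {c e x : F} (hc : c ≠ 0)
    (hg : B.image (fun z => c * z + e) = B) (hx : x ∈ B) (hfix : c * x + e = x) : c = 1 := by
  obtain ⟨y, hy, hyx⟩ := exists_mem_ne hB x
  obtain ⟨a, b, ha, hh, hxy⟩ := htrans x hx y hy
  -- Conjugating `g` by `h` gives a map with multiplier `c` fixing `y` instead of `x`;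
  -- composing it with `g⁻¹` leaves a translation.
  have htransl : (1 - c⁻¹) * (x - y) +ᵥ B = B := by
    have : (fun z => (1 - c⁻¹) * (x - y) +ᵥ z) = (fun z => c⁻¹ * (z - e)) ∘
        (fun z => a * z + b) ∘ (fun z => c * z + e) ∘ (fun z => a⁻¹ * (z - b)) := by
      funext z
      simp only [vadd_eq_add, Function.comp]
      field_simp
      linear_combination (1 - a) * hfix + (c - 1) * hxy
    rw [vadd_finset_def, this, ← image_image, ← image_image, ← image_image,
      image_inv_affine_eq_self ha hh, hg, hh, image_inv_affine_eq_self hc hg]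
  rw [← AddAction.mem_stabilizer_iff, hT, AddSubgroup.mem_bot, mul_eq_zero, sub_eq_zero,
    sub_eq_zero, eq_comm (a := x)] at htransl
  exact htransl.elim (fun h => inv_eq_one.1 h.symm) (absurd · hyx)

theorem stabilizer_eq_bot (hT : AddAction.stabilizer F B = ⊥) (htrans : IsAffineTransitive B)
    (hB : 1 < #B) (h0 : (0 : F) ∈ B) : stabilizer Fˣ B = ⊥ := by
  refine (Subgroup.eq_bot_iff_forall _).2 fun u hu => Units.ext ?_
  rw [mem_stabilizer_iff, units_smul_finset_eq_image] at hu
  exact eq_one_of_image_eq_self_of_fixed hT htrans hB u.ne_zero hu h0 (by simp)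

theorem exists_eq_of_card_eq_three (hT : AddAction.stabilizer F B = ⊥)
    (htrans : IsAffineTransitive B) (h0 : (0 : F) ∈ B) (hB : #B = 3) :
    ∃ c u : F, c ≠ 1 ∧ c ^ 2 + c + 1 = 0 ∧ u ≠ 0 ∧ B = {0, u, c * u + u} := by
  obtain ⟨u, v, huv, hBuv⟩ := card_eq_two.1 (by rw [card_erase_of_mem h0, hB] : #(B.erase 0) = 2)
  have hu : u ≠ 0 := ne_of_mem_erase (hBuv ▸ mem_insert_self u {v})
  have hv : v ≠ 0 := ne_of_mem_erase (hBuv ▸ mem_insert_of_mem (mem_singleton_self v))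
  obtain rfl : B = {0, u, v} := by rw [← hBuv, insert_erase h0]
  obtain ⟨c, e, hc, hg, he⟩ := htrans 0 h0 u (by simp)
  obtain rfl : u = e := by simpa using he.symm
  have hc1 : c ≠ 1 := by
    rintro rfl
    have : u ∈ AddAction.stabilizer F ({0, u, v} : Finset F) := by
      rw [AddAction.mem_stabilizer_iff, vadd_finset_eq_image, hg]
    rw [hT] at this
    exact hu this
  -- `z ↦ c z + u` permutes `{0, u, v}` without fixed points, so it is the cycle `0 ↦ u ↦ v ↦ 0`.
  have hfree : ∀ z ∈ ({0, u, v} : Finset F), c * z + u ≠ z := fun z hz hfix =>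
    hc1 (eq_one_of_image_eq_self_of_fixed hT htrans (by rw [hB]; norm_num) hc hg hz hfix)
  have hmaps : ∀ z ∈ ({0, u, v} : Finset F), c * z + u ∈ ({0, u, v} : Finset F) := fun z hz =>
    hg ▸ mem_image_of_mem _ hz
  have hcv : c * v + u = 0 := by
    have := hmaps v (by simp)
    simp only [mem_insert, mem_singleton] at this
    rcases this with h | h | h
    · exact h
    · exact absurd (by simpa using h) (mul_ne_zero hc hv)
    · exact absurd h (hfree v (by simp))
  have hcu : c * u + u = v := by
    have := hmaps u (by simp)
    simp only [mem_insert, mem_singleton] at this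
    rcases this with h | h | h
    · exact absurd (mul_left_cancel₀ hc (add_right_cancel (h.trans hcv.symm))) huv
    · exact absurd h (hfree u (by simp))
    · exact h
  refine ⟨c, u, hc1, ?_, hu, by rw [hcu]⟩
  have : (c ^ 2 + c + 1) * u = 0 := by linear_combination c * hcu + hcv
  exact (mul_eq_zero.1 this).resolve_right hu

end PointStabilizers

theorem coe_eq_image_cube_roots {c u : F} (hc1 : c ≠ 1) (hc : c ^ 2 + c + 1 = 0) :
    (({0, u, c * u + u} : Finset F) : Set F) =
      (fun x => u / (c - 1) * x + -(u / (c - 1))) '' {x | x ^ 3 = 1} := by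
  have hc1' : c - 1 ≠ 0 := sub_ne_zero.2 hc1
  rw [setOf_pow_three_eq_one hc]
  simp only [coe_insert, coe_singleton, Set.image_insert_eq, Set.image_singleton]
  congr 1
  · ring
  congr 1
  · field_simp; ring
  · congr 1; field_simp; ring

theorem mem_iff_exists_image_eq {𝓑 : Finset (Finset F)} (hinv : IsAffineInvariant 𝓑)
    (hflag : IsAffineFlagTransitive 𝓑) (hne : ∀ C ∈ 𝓑, C.Nonempty) {B : Finset F} (hB : B ∈ 𝓑)
    {C : Finset F} : C ∈ 𝓑 ↔ ∃ a b : F, a ≠ 0 ∧ B.image (fun z => a * z + b) = C := by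
  refine ⟨fun hC => ?_, fun ⟨a, b, ha, hC⟩ => hC ▸ hinv B hB a b ha⟩
  obtain ⟨x, hx⟩ := hne B hB
  obtain ⟨y, hy⟩ := hne C hC
  obtain ⟨a, b, ha, hC', -⟩ := hflag B hB C hC x hx y hy
  exact ⟨a, b, ha, hC'⟩

theorem exists_image_eq_iff_exists_coe_eq_image {B : Finset F} {H : Set F} {m n : F}
    (hm : m ≠ 0) (hB : (B : Set F) = (fun x => m * x + n) '' H) {C : Finset F} :
    (∃ a b : F, a ≠ 0 ∧ B.image (fun z => a * z + b) = C) ↔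
      ∃ a b : F, a ≠ 0 ∧ (C : Set F) = (fun x => a * x + b) '' H := by
  constructor
  · rintro ⟨a, b, ha, rfl⟩
    refine ⟨a * m, a * n + b, mul_ne_zero ha hm, ?_⟩
    rw [coe_image, hB, Set.image_image]
    congr 1; funext x; ring
  · rintro ⟨a, b, ha, hC⟩
    refine ⟨a * m⁻¹, b - a * m⁻¹ * n, mul_ne_zero ha (inv_ne_zero hm), coe_injective ?_⟩
    rw [coe_image, hB, Set.image_image, hC]
    congr 1; funext x; field_simp; ring

end AffineDesigns

theorem stmt_5_general (p d k : ℕ)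
    (F : Type*) [Field F] [Fintype F] [DecidableEq F]
    (hcard : Fintype.card F = p ^ d)
    (𝓑 : Finset (Finset F))
    (hk : ∀ B ∈ 𝓑, B.card = k)
    (hlam : ∀ x y : F, x ≠ y → (𝓑.filter (fun B => x ∈ B ∧ y ∈ B)).card = 2)
    (hk2 : 2 < k)
    (hinv : ∀ B ∈ 𝓑, ∀ a b : F, a ≠ 0 → B.image (fun x => a * x + b) ∈ 𝓑)
    (hflag : ∀ B ∈ 𝓑, ∀ C ∈ 𝓑, ∀ x ∈ B, ∀ y ∈ C,
      ∃ a b : F, a ≠ 0 ∧ B.image (fun z => a * z + b) = C ∧ a * x + b = y) :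
    p ^ d % 3 = 1 ∧ k = 3 ∧
    (∀ S : Finset F, S ∈ 𝓑 ↔ ∃ a b : F, a ≠ 0 ∧
      (↑S : Set F) = (fun x => a * x + b) '' {x : F | x ^ 3 = 1}) := by
  obtain ⟨B, hB⟩ : {B ∈ 𝓑 | (0 : F) ∈ B ∧ (1 : F) ∈ B}.Nonempty :=
    card_pos.1 (by rw [hlam 0 1 zero_ne_one]; norm_num)
  obtain ⟨hB, h0, -⟩ := mem_filter.1 hB
  have hkS := card_eq_two_mul_card_stabilizer_add_one hk hlam hinv hflag hB h0
  have hT := addStabilizer_eq_bot h0 (by rw [hk B hB, hkS])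
  have htrans : IsAffineTransitive B := hflag B hB B hB
  have hk3 : k = 3 := by
    rw [hkS, stabilizer_eq_bot hT htrans (by rw [hk B hB]; omega) h0, Subgroup.card_bot]
  obtain ⟨c, u, hc1, hc, hu, rfl⟩ := exists_eq_of_card_eq_three hT htrans h0 (by rw [hk _ hB, hk3])
  refine ⟨hcard ▸ card_mod_three_eq_one hc1 hc, hk3, fun S => ?_⟩
  have hne : ∀ C ∈ 𝓑, C.Nonempty := fun C hC => card_pos.1 (by rw [hk C hC]; omega)
  rw [mem_iff_exists_image_eq hinv hflag hne hB, exists_image_eq_iff_exists_coe_eq_image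
    (div_ne_zero hu (sub_ne_zero.2 hc1)) (coe_eq_image_cube_roots hc1 hc)]

/-- Let `D` be a nontrivial 2-(p^d,k,2) design with point set the finite
field `F = GF(p^d)` admitting `AGL₁(p^d) = {x ↦ a·x + b : a ≠ 0}` as a flag-transitive
automorphism group.  Then `p^d ≡ 1 (mod 3)`, `k = 3`, and the blocks are exactly the sets
`a·H + b` where `H` is the unique subgroup of order 3 of `F*` (the cube roots of unity). -/
theorem stmt_5 (p d k : ℕ) [Fact p.Prime] (hd : 1 ≤ d)
    (F : Type*) [Field F] [Fintype F] [DecidableEq F]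
    (hcard : Fintype.card F = p ^ d)
    (𝓑 : Finset (Finset F))
    (hk : ∀ B ∈ 𝓑, B.card = k)
    (hlam : ∀ x y : F, x ≠ y → (𝓑.filter (fun B => x ∈ B ∧ y ∈ B)).card = 2)
    (hk2 : 2 < k) (hkv : k < p ^ d)
    (hinv : ∀ B ∈ 𝓑, ∀ a b : F, a ≠ 0 → B.image (fun x => a * x + b) ∈ 𝓑)
    (hflag : ∀ B ∈ 𝓑, ∀ C ∈ 𝓑, ∀ x ∈ B, ∀ y ∈ C,
      ∃ a b : F, a ≠ 0 ∧ B.image (fun z => a * z + b) = C ∧ a * x + b = y) :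
    p ^ d % 3 = 1 ∧ k = 3 ∧
    (∀ S : Finset F, S ∈ 𝓑 ↔ ∃ a b : F, a ≠ 0 ∧
      (↑S : Set F) = (fun x => a * x + b) '' {x : F | x ^ 3 = 1}) :=
  stmt_5_general p d k F hcard 𝓑 hk hlam hk2 hinv hflag
end

section
/- Let q be a prime power with q ≡ 1 (mod 3), let F = GF(q), and let H be the unique subgroup of order 3 of the multiplicative group F*. Then the incidence structure with point set F and block set {aH + b : a ∈ F*, b ∈ F} is a nontrivial 2-(q,3,2) design, and the affine group AGL_1(q) = {x ↦ ax + b : a ∈ F*, b ∈ F} acts on it as a flag-transitive group of automorphisms. -/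
/-- The subgroup of cube roots of unity of `F`, as a finite set. -/
def cubeRoots (F : Type*) [Field F] [Fintype F] [DecidableEq F] : Finset F :=
  Finset.univ.filter (fun x => x ^ 3 = 1)

/-- The blocks `a·H + b` (`a ≠ 0`), where `H` is the set of cube roots of unity. -/
def aglBlocks (F : Type*) [Field F] [Fintype F] [DecidableEq F] : Finset (Finset F) :=
  ((Finset.univ : Finset (F × F)).filter (fun ab => ab.1 ≠ 0)).image
    (fun ab => (cubeRoots F).image (fun x => ab.1 * x + ab.2))

section Aux

variable {F : Type*} [Field F] [Fintype F] [DecidableEq F]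

lemma mem_cubeRoots {x : F} : x ∈ cubeRoots F ↔ x ^ 3 = 1 := by
  simp [cubeRoots]

lemma cube_ne_zero {x : F} (h : x ^ 3 = 1) : x ≠ 0 := by
  intro h0; rw [h0] at h; simp at h

lemma blk_mem {a : F} (b : F) (ha : a ≠ 0) :
    (cubeRoots F).image (fun x => a * x + b) ∈ aglBlocks F := by
  simp only [aglBlocks, Finset.mem_image, Finset.mem_filter, Finset.mem_univ, true_and]
  exact ⟨(a, b), ha, rfl⟩

lemma mem_aglBlocks {B : Finset F} :
    B ∈ aglBlocks F ↔ ∃ a b : F, a ≠ 0 ∧ B = (cubeRoots F).image (fun x => a * x + b) := by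
  simp only [aglBlocks, Finset.mem_image, Finset.mem_filter, Finset.mem_univ, true_and]
  constructor
  · rintro ⟨⟨a, b⟩, ha, rfl⟩; exact ⟨a, b, ha, rfl⟩
  · rintro ⟨a, b, ha, rfl⟩; exact ⟨(a, b), ha, rfl⟩

lemma affine_inj {a : F} (b : F) (ha : a ≠ 0) :
    Function.Injective (fun x : F => a * x + b) := by
  intro u v h
  simp only [add_left_inj] at h
  exact mul_left_cancel₀ ha h

lemma image_mul_cubeRoots {μ : F} (hμ : μ ^ 3 = 1) :
    (cubeRoots F).image (fun x => μ * x) = cubeRoots F := by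
  apply Finset.eq_of_subset_of_card_le
  · intro y hy
    obtain ⟨x, hx, rfl⟩ := Finset.mem_image.mp hy
    rw [mem_cubeRoots] at hx ⊢
    rw [mul_pow, hμ, hx, one_mul]
  · rw [Finset.card_image_of_injective _ (mul_right_injective₀ (cube_ne_zero hμ))]

lemma blk_rescale (a b : F) {ω : F} (hω : ω ^ 3 = 1) :
    (cubeRoots F).image (fun x => (a * ω) * x + b)
      = (cubeRoots F).image (fun x => a * x + b) := by
  conv_rhs => rw [← image_mul_cubeRoots hω]
  rw [Finset.image_image]
  apply Finset.image_congr
  intro x _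
  simp only [Function.comp_apply]
  ring

variable {ζ : F} (hζ3 : ζ ^ 3 = 1) (hζ1 : ζ ≠ 1)

include hζ3 hζ1

lemma sum_zeta : ζ ^ 2 + ζ + 1 = 0 := by
  have h : (ζ - 1) * (ζ ^ 2 + ζ + 1) = 0 := by linear_combination hζ3
  rcases mul_eq_zero.mp h with h' | h'
  · exact absurd (sub_eq_zero.mp h') hζ1
  · exact h'

lemma zeta_sq_ne_one : ζ ^ 2 ≠ 1 := by
  intro h
  exact hζ1 (by linear_combination hζ3 - ζ * h)

lemma zeta_ne_zeta_sq : ζ ≠ ζ ^ 2 := by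
  intro h
  exact zeta_sq_ne_one hζ3 hζ1 (by linear_combination hζ3 + ζ * h)

lemma cubeRoots_eq : cubeRoots F = {1, ζ, ζ ^ 2} := by
  ext x
  rw [mem_cubeRoots]
  simp only [Finset.mem_insert, Finset.mem_singleton]
  constructor
  · intro hx
    have hs := sum_zeta hζ3 hζ1
    have h : (x - 1) * (x - ζ) * (x - ζ ^ 2) = 0 := by
      linear_combination hx + (x - 1) * hζ3 + (x - x ^ 2) * hs
    rcases mul_eq_zero.mp h with h' | h'
    · rcases mul_eq_zero.mp h' with h'' | h''
      · exact Or.inl (sub_eq_zero.mp h'')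
      · exact Or.inr (Or.inl (sub_eq_zero.mp h''))
    · exact Or.inr (Or.inr (sub_eq_zero.mp h'))
  · rintro (rfl | rfl | rfl)
    · exact one_pow 3
    · exact hζ3
    · rw [← pow_mul]; rw [show 2 * 3 = 3 * 2 by ring, pow_mul, hζ3, one_pow]

lemma cubeRoots_card : (cubeRoots F).card = 3 := by
  rw [cubeRoots_eq hζ3 hζ1]
  rw [Finset.card_insert_of_notMem (by
    simp only [Finset.mem_insert, Finset.mem_singleton]
    push_neg
    exact ⟨fun h => hζ1 h.symm, fun h => zeta_sq_ne_one hζ3 hζ1 h.symm⟩)]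
  rw [Finset.card_insert_of_notMem (by
    simp only [Finset.mem_singleton]
    exact zeta_ne_zeta_sq hζ3 hζ1)]
  rfl

lemma cubeRoots_sum : (∑ x ∈ cubeRoots F, x) = 0 := by
  rw [cubeRoots_eq hζ3 hζ1]
  rw [Finset.sum_insert (by
    simp only [Finset.mem_insert, Finset.mem_singleton]
    push_neg
    exact ⟨fun h => hζ1 h.symm, fun h => zeta_sq_ne_one hζ3 hζ1 h.symm⟩)]
  rw [Finset.sum_insert (by
    simp only [Finset.mem_singleton]
    exact zeta_ne_zeta_sq hζ3 hζ1)]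
  rw [Finset.sum_singleton]
  linear_combination sum_zeta hζ3 hζ1

lemma blk_sum {a : F} (b : F) (ha : a ≠ 0) :
    (∑ z ∈ (cubeRoots F).image (fun x => a * x + b), z) = 3 * b := by
  rw [Finset.sum_image (fun x _ y _ h => affine_inj b ha h)]
  rw [Finset.sum_add_distrib, ← Finset.mul_sum, cubeRoots_sum hζ3 hζ1, mul_zero, zero_add,
    Finset.sum_const, cubeRoots_card hζ3 hζ1]
  rw [nsmul_eq_mul]
  norm_num

lemma pair_count (h3 : (3 : F) ≠ 0) (x y : F) (hxy : x ≠ y) :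
    ((aglBlocks F).filter (fun B => x ∈ B ∧ y ∈ B)).card = 2 := by
  have hz : ζ ≠ 0 := cube_ne_zero hζ3
  have hd : x - y ≠ 0 := sub_ne_zero.mpr hxy
  have h1ζ : (1 : F) - ζ ≠ 0 := sub_ne_zero.mpr (Ne.symm hζ1)
  have h1ζ2 : (1 : F) - ζ ^ 2 ≠ 0 := sub_ne_zero.mpr (Ne.symm (zeta_sq_ne_one hζ3 hζ1))
  set a₁ : F := (x - y) / (1 - ζ) with ha₁def
  have ha₁eq : a₁ * (1 - ζ) = x - y := div_mul_cancel₀ _ h1ζ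
  have ha₁ : a₁ ≠ 0 := by
    intro h; rw [h, zero_mul] at ha₁eq; exact hd ha₁eq.symm
  set B₁ : Finset F := (cubeRoots F).image (fun z => a₁ * z + (x - a₁)) with hB₁def
  set B₂ : Finset F := (cubeRoots F).image (fun z => (-(a₁ * ζ)) * z + (x + a₁ * ζ)) with hB₂def
  have hne2 : -(a₁ * ζ) ≠ 0 := by
    simp only [neg_ne_zero]
    exact mul_ne_zero ha₁ hz
  have key : (aglBlocks F).filter (fun B => x ∈ B ∧ y ∈ B) = {B₁, B₂} := by
    ext B
    simp only [Finset.mem_filter, Finset.mem_insert, Finset.mem_singleton]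
    constructor
    · rintro ⟨hB, hxB, hyB⟩
      obtain ⟨a, b, ha, rfl⟩ := mem_aglBlocks.mp hB
      obtain ⟨ω, hωm, hω⟩ := Finset.mem_image.mp hxB
      obtain ⟨ω', hω'm, hω'⟩ := Finset.mem_image.mp hyB
      rw [mem_cubeRoots] at hωm hω'm
      have hωz : ω ≠ 0 := cube_ne_zero hωm
      set τ : F := ω' * ω ^ 2 with hτdef
      have hτ3 : τ ^ 3 = 1 := by
        rw [hτdef, mul_pow, ← pow_mul, hω'm, show 2 * 3 = 3 * 2 by ring, pow_mul, hωm,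
          one_pow, one_mul]
      have hτ1 : τ ≠ 1 := by
        intro h
        apply hxy
        have : ω' = ω := by
          have hω3 := hωm
          have : τ * ω = ω := by rw [h, one_mul]
          rw [hτdef] at this
          calc ω' = ω' * 1 := by rw [mul_one]
            _ = ω' * ω ^ 3 := by rw [hωm]
            _ = (ω' * ω ^ 2) * ω := by ring
            _ = ω := this
        rw [← hω, ← hω', this]
      have haω : a * ω ≠ 0 := mul_ne_zero ha hωz
      have hrescale : (cubeRoots F).image (fun z => a * z + b)
          = (cubeRoots F).image (fun z => (a * ω) * z + b) := (blk_rescale a b hωm).symm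
      have hyτ : (a * ω) * τ + b = y := by
        rw [← hω']
        rw [hτdef]
        linear_combination a * ω' * hωm
      have hxτ : (a * ω) * 1 + b = x := by rw [mul_one]; exact hω
      -- τ = ζ or τ = ζ^2
      have : τ = 1 ∨ τ = ζ ∨ τ = ζ ^ 2 := by
        have h := (cubeRoots_eq hζ3 hζ1) ▸ (mem_cubeRoots.mpr hτ3)
        simp only [Finset.mem_insert, Finset.mem_singleton] at h
        exact h
      rcases this with h | h | h
      · exact absurd h hτ1
      · left
        have hav : a * ω = a₁ := by
          apply mul_right_cancel₀ h1ζ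
          rw [ha₁eq]
          rw [h] at hyτ
          linear_combination hxτ - hyτ
        have hbv : b = x - a₁ := by rw [← hav]; linear_combination hxτ
        rw [hrescale, hav, hbv, hB₁def]
      · right
        have hav : a * ω = -(a₁ * ζ) := by
          apply mul_right_cancel₀ h1ζ2
          rw [h] at hyτ
          have hr : -(a₁ * ζ) * (1 - ζ ^ 2) = x - y := by
            linear_combination ha₁eq + a₁ * hζ3
          rw [hr]
          linear_combination hxτ - hyτ
        have hbv : b = x + a₁ * ζ := by
          rw [← sub_eq_iff_eq_add']
          have := hxτ
          rw [hav] at this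
          linear_combination this
        rw [hrescale, hav, hbv, hB₂def]
    · have hxB₁ : x ∈ B₁ := by
        rw [hB₁def]
        apply Finset.mem_image.mpr
        exact ⟨1, mem_cubeRoots.mpr (one_pow 3), by ring⟩
      have hyB₁ : y ∈ B₁ := by
        rw [hB₁def]
        apply Finset.mem_image.mpr
        refine ⟨ζ, mem_cubeRoots.mpr hζ3, ?_⟩
        linear_combination -ha₁eq
      have hxB₂ : x ∈ B₂ := by
        rw [hB₂def]
        apply Finset.mem_image.mpr
        exact ⟨1, mem_cubeRoots.mpr (one_pow 3), by ring⟩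
      have hyB₂ : y ∈ B₂ := by
        rw [hB₂def]
        apply Finset.mem_image.mpr
        refine ⟨ζ ^ 2, mem_cubeRoots.mpr (by rw [← pow_mul, show 2 * 3 = 3 * 2 by ring,
          pow_mul, hζ3, one_pow]), ?_⟩
        linear_combination -a₁ * hζ3 - ha₁eq
      rintro (rfl | rfl)
      · exact ⟨blk_mem _ ha₁, hxB₁, hyB₁⟩
      · exact ⟨blk_mem _ hne2, hxB₂, hyB₂⟩
  rw [key]
  have hB₁B₂ : B₁ ≠ B₂ := by
    intro h
    have hs1 : (∑ z ∈ B₁, z) = 3 * (x - a₁) := blk_sum hζ3 hζ1 _ ha₁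
    have hs2 : (∑ z ∈ B₂, z) = 3 * (x + a₁ * ζ) := blk_sum hζ3 hζ1 _ hne2
    rw [h, hs2] at hs1
    have h4 : x + a₁ * ζ = x - a₁ := mul_left_cancel₀ h3 hs1
    have h5 : ζ = -1 := by
      have : a₁ * ζ = a₁ * (-1) := by linear_combination h4
      exact mul_left_cancel₀ ha₁ this
    have := sum_zeta hζ3 hζ1
    rw [h5] at this
    norm_num at this
  rw [Finset.card_insert_of_notMem (Finset.notMem_singleton.mpr hB₁B₂), Finset.card_singleton]

end Aux

/-- Let `q ≡ 1 (mod 3)` be a prime power, `F = GF(q)`, `H ≤ F*` the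
unique subgroup of order 3.  Then the incidence structure with point set `F` and blocks
`{aH + b : a ∈ F*, b ∈ F}` is a nontrivial 2-(q,3,2) design on which
`AGL₁(q) = {x ↦ ax + b : a ≠ 0}` acts as a flag-transitive automorphism group. -/
theorem stmt_6 (q : ℕ) (F : Type*) [Field F] [Fintype F] [DecidableEq F]
    (hcard : Fintype.card F = q) (hq : q % 3 = 1) :
    (cubeRoots F).card = 3 ∧
    (∀ B ∈ aglBlocks F, B.card = 3) ∧
    (∀ x y : F, x ≠ y → ((aglBlocks F).filter (fun B => x ∈ B ∧ y ∈ B)).card = 2) ∧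
    3 < q ∧
    (∀ B ∈ aglBlocks F, ∀ a b : F, a ≠ 0 → B.image (fun x => a * x + b) ∈ aglBlocks F) ∧
    (∀ B ∈ aglBlocks F, ∀ C ∈ aglBlocks F, ∀ x ∈ B, ∀ y ∈ C,
      ∃ a b : F, a ≠ 0 ∧ B.image (fun z => a * z + b) = C ∧ a * x + b = y) := by
  have h2q : 1 < q := hcard ▸ Fintype.one_lt_card
  have hq3 : 3 < q := by omega
  -- characteristic is not 3
  have h3F : (3 : F) ≠ 0 := by
    intro h
    have hdvd : ringChar F ∣ 3 := ringChar.dvd (by exact_mod_cast h)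
    rcases (Nat.Prime.eq_one_or_self_of_dvd (by norm_num) _ hdvd) with h1 | h1
    · exact CharP.ringChar_ne_one h1
    · haveI : CharP F 3 := h1 ▸ ringChar.charP F
      obtain ⟨n, -, hn⟩ := FiniteField.card F 3
      rw [hcard] at hn
      have : 3 ∣ q := hn ▸ dvd_pow_self 3 n.pos.ne'
      omega
  -- a primitive cube root of unity
  haveI : Fact (Nat.Prime 3) := ⟨by norm_num⟩
  have hdvd : 3 ∣ Fintype.card Fˣ := by
    rw [Fintype.card_units, hcard]
    omega
  obtain ⟨g, hg⟩ := exists_prime_orderOf_dvd_card (G := Fˣ) 3 hdvd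
  set ζ : F := (g : F) with hζdef
  have hζ3 : ζ ^ 3 = 1 := by
    have h : g ^ 3 = 1 := hg ▸ pow_orderOf_eq_one g
    rw [hζdef, ← Units.val_pow_eq_pow_val, h, Units.val_one]
  have hζ1 : ζ ≠ 1 := by
    intro h
    have : g = 1 := Units.ext h
    rw [this, orderOf_one] at hg
    norm_num at hg
  refine ⟨cubeRoots_card hζ3 hζ1, ?_, pair_count hζ3 hζ1 h3F, hq3, ?_, ?_⟩
  · -- every block has 3 points
    intro B hB
    obtain ⟨a, b, ha, rfl⟩ := mem_aglBlocks.mp hB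
    rw [Finset.card_image_of_injective _ (affine_inj b ha)]
    exact cubeRoots_card hζ3 hζ1
  · -- AGL₁ acts on the blocks
    intro B hB a b ha
    obtain ⟨a₁, b₁, ha₁, rfl⟩ := mem_aglBlocks.mp hB
    rw [Finset.image_image]
    have hfun : ((fun x => a * x + b) ∘ fun x => a₁ * x + b₁)
        = fun x => (a * a₁) * x + (a * b₁ + b) := by
      funext x; simp only [Function.comp_apply]; ring
    rw [hfun]
    exact blk_mem _ (mul_ne_zero ha ha₁)
  · -- flag transitivity
    intro B hB C hC x hx y hy
    obtain ⟨a₁, b₁, ha₁, rfl⟩ := mem_aglBlocks.mp hB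
    obtain ⟨a₂, b₂, ha₂, rfl⟩ := mem_aglBlocks.mp hC
    obtain ⟨ω, hωm, hω⟩ := Finset.mem_image.mp hx
    obtain ⟨ω', hω'm, hω'⟩ := Finset.mem_image.mp hy
    rw [mem_cubeRoots] at hωm hω'm
    have hωz : ω ≠ 0 := cube_ne_zero hωm
    have hω'z : ω' ≠ 0 := cube_ne_zero hω'm
    refine ⟨a₂ * ω' * ω ^ 2 * a₁⁻¹, y - a₂ * ω' * ω ^ 2 * a₁⁻¹ * x, ?_, ?_, by ring⟩
    · exact mul_ne_zero (mul_ne_zero (mul_ne_zero ha₂ hω'z) (pow_ne_zero 2 hωz))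
        (inv_ne_zero ha₁)
    · set a : F := a₂ * ω' * ω ^ 2 * a₁⁻¹ with hadef
      set b : F := y - a * x with hbdef
      have hinv : a₁⁻¹ * a₁ = 1 := inv_mul_cancel₀ ha₁
      have h1 : a * a₁ = a₂ * (ω' * ω ^ 2) := by
        rw [hadef]
        linear_combination (a₂ * ω' * ω ^ 2) * hinv
      have h2 : a * b₁ + b = b₂ := by
        rw [hbdef]
        linear_combination a * hω - hω' - ω * h1 - a₂ * ω' * hωm
      have hμ : (ω' * ω ^ 2) ^ 3 = 1 := by
        rw [mul_pow, ← pow_mul, hω'm, show 2 * 3 = 3 * 2 by ring, pow_mul, hωm,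
          one_pow, one_mul]
      rw [Finset.image_image]
      have hfun : ((fun z => a * z + b) ∘ fun x => a₁ * x + b₁)
          = fun x => (a₂ * (ω' * ω ^ 2)) * x + b₂ := by
        funext x
        simp only [Function.comp_apply]
        rw [← h1, ← h2]
        ring
      rw [hfun]
      exact blk_rescale a₂ b₂ hμ
end

section
/- Let F = GF(3)[x]/(x^4 + x − 1) ≅ GF(3^4) and let ω be the image of x in F. Then ω generates the multiplicative group F*, and, setting B = {0, 1, ω^16, ω^56, ω^58, ω^73}, G_0 = ⟨μ, φ⟩ where μ : y ↦ ω^5 y and φ : y ↦ y^9, and G = T ⋊ G_0 where T is the group of translations y ↦ y + c of F: the group G_0 has order 32, the incidence structure with point set F and block set the G-orbit of B is a 2-(81,6,2) design, and G acts flag-transitively on it. -/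
/-!
The base block is `B = W ∪ (1 + W)` for the `GF(3)`-line `W = {0, ω¹⁶, -ω¹⁶}`, so every
translate `B - b` with `b ∈ B` is `B` or `-B`, and `-1 = ω⁴⁰` is `μ⁸ ∈ G₀`. Hence every flag
`(x, C)` of the development of `B` under `G = T ⋊ G₀` is the image of the flag `(0, B)`,
which gives flag-transitivity, and the blocks through `0` are exactly the images `g B`,
`g ∈ G₀`. As `G₀` has three orbits on `F*`, represented by `1, ω, ω²`, the count of blocks
through a pair reduces to the pairs `{0, ω^r}` with `r < 3`. In discrete logarithms,
`(μⁱφʲ) B = {0} ∪ ω ^ (5i + 9ʲ {0, 16, 56, 58, 73})`, and the count becomes a finite check.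
The identities in `F` that are needed are read off from the coordinates of `ωᵏ` in the basis
`1, ω, ω², ω³`, computed by iterating multiplication by `ω`.
-/

open Equiv Finset

section AffineDevelopment

variable {A : Type*} [AddCommGroup A]

def addPerms (A : Type*) [AddCommGroup A] : Subgroup (Perm A) where
  carrier := {g | ∀ u v, g (u + v) = g u + g v}
  mul_mem' {f g} hf hg u v := by simp only [Perm.mul_apply, hg u v, hf (g u) (g v)]
  one_mem' _ _ := rfl
  inv_mem' {g} hg u v := g.injective (by simp only [hg _ _, Perm.coe_inv, apply_symm_apply])

theorem map_sub_of_mem_addPerms {g : Perm A} (hg : g ∈ addPerms A) (u v : A) :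
    g (u - v) = g u - g v :=
  (AddMonoidHom.mk' g hg).map_sub u v

theorem map_zero_of_mem_addPerms {g : Perm A} (hg : g ∈ addPerms A) : g 0 = 0 :=
  (AddMonoidHom.mk' g hg).map_zero

def affineExtension (H : Subgroup (Perm A)) : Subgroup (Perm A) where
  carrier := {σ | ∃ g ∈ H ⊓ addPerms A, ∃ c, ∀ y, σ y = g y + c}
  mul_mem' := by
    rintro σ τ ⟨g, hg, c, hσ⟩ ⟨h, hh, d, hτ⟩
    exact ⟨g * h, mul_mem hg hh, g d + c, fun y => by
      rw [Perm.mul_apply, hτ, hσ, hg.2, Perm.mul_apply, add_assoc]⟩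
  one_mem' := ⟨1, one_mem _, 0, fun y => (add_zero y).symm⟩
  inv_mem' := by
    rintro σ ⟨g, hg, c, hσ⟩
    refine ⟨g⁻¹, inv_mem hg, g⁻¹ (-c), fun y => ?_⟩
    rw [Perm.inv_eq_iff_eq, hσ, hg.2]
    simp

variable [DecidableEq A] (H : Subgroup (Perm A)) (B : Finset A)

def development : Set (Finset A) :=
  {C | ∃ g ∈ H, ∃ c : A, C = B.image (fun y => g y + c)}

variable {H B}

theorem card_of_mem_development {C : Finset A} (hC : C ∈ development H B) : C.card = B.card := by
  obtain ⟨g, -, c, rfl⟩ := hC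
  exact card_image_of_injective _ ((add_left_injective c).comp g.injective)

variable (hH : H ≤ addPerms A)
include hH

theorem mem_development_iff {C : Finset A} :
    C ∈ development H B ↔ ∃ σ ∈ affineExtension H, C = B.image σ := by
  constructor
  · rintro ⟨g, hg, c, rfl⟩
    exact ⟨g.trans (Equiv.addRight c), ⟨g, ⟨hg, hH hg⟩, c, fun _ => rfl⟩, rfl⟩
  · rintro ⟨σ, ⟨g, hg, c, hσ⟩, rfl⟩
    exact ⟨g, hg.1, c, image_congr fun y _ => hσ y⟩

theorem image_mem_development {σ : Perm A} (hσ : σ ∈ affineExtension H) {C : Finset A}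
    (hC : C ∈ development H B) : C.image σ ∈ development H B := by
  obtain ⟨τ, hτ, rfl⟩ := (mem_development_iff hH).1 hC
  exact (mem_development_iff hH).2 ⟨σ * τ, mul_mem hσ hτ, image_image⟩

theorem ncard_blocks_through_apply {σ : Perm A} (hσ : σ ∈ affineExtension H) (x y : A) :
    {C | C ∈ development H B ∧ σ x ∈ C ∧ σ y ∈ C}.ncard =
      {C | C ∈ development H B ∧ x ∈ C ∧ y ∈ C}.ncard := by
  have himage : {C | C ∈ development H B ∧ σ x ∈ C ∧ σ y ∈ C} =
      image σ '' {C | C ∈ development H B ∧ x ∈ C ∧ y ∈ C} := by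
    ext C
    constructor
    · rintro ⟨hC, hx, hy⟩
      refine ⟨C.image ⇑σ⁻¹, ⟨image_mem_development hH (inv_mem hσ) hC, ?_, ?_⟩, ?_⟩
      · simpa using mem_image_of_mem (⇑σ⁻¹) hx
      · simpa using mem_image_of_mem (⇑σ⁻¹) hy
      · simp [image_image]
    · rintro ⟨D, ⟨hD, hx, hy⟩, rfl⟩
      exact ⟨image_mem_development hH hσ hD, mem_image_of_mem σ hx, mem_image_of_mem σ hy⟩
  rw [himage, (image_injective σ.injective).injOn.ncard_image]

variable (hB : ∀ b ∈ B, ∃ h ∈ H, ∀ y ∈ B, h (y - b) ∈ B)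
include hB

theorem exists_map_zero_of_mem {C : Finset A} (hC : C ∈ development H B) {x : A} (hx : x ∈ C) :
    ∃ ρ ∈ affineExtension H, B.image ρ = C ∧ ρ 0 = x := by
  obtain ⟨σ, hσ, rfl⟩ := (mem_development_iff hH).1 hC
  obtain ⟨b, hb, rfl⟩ := mem_image.1 hx
  obtain ⟨h, hh, hmaps⟩ := hB b hb
  let τ : Perm A := h.trans (Equiv.addRight (-h b))
  have hτ_apply (y : A) : τ y = h (y - b) := by
    rw [map_sub_of_mem_addPerms (hH hh), sub_eq_add_neg]; rfl
  have hτ : τ ∈ affineExtension H := ⟨h, ⟨hh, hH hh⟩, -h b, fun _ => rfl⟩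
  have hτB : B.image τ = B :=
    eq_of_subset_of_card_le (image_subset_iff.2 fun y hy => hτ_apply y ▸ hmaps y hy)
      (card_image_of_injective _ τ.injective).ge
  have hτb : τ⁻¹ 0 = b := by
    rw [Perm.inv_eq_iff_eq, hτ_apply, sub_self, map_zero_of_mem_addPerms (hH hh)]
  refine ⟨σ * τ⁻¹, mul_mem hσ (inv_mem hτ), ?_, by rw [Perm.mul_apply, hτb]⟩
  conv_lhs => rw [← hτB, image_image]
  congr 1
  ext y
  simp

theorem exists_eq_image_of_zero_mem {C : Finset A} (hC : C ∈ development H B) (h0 : 0 ∈ C) :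
    ∃ g ∈ H, C = B.image g := by
  obtain ⟨ρ, ⟨g, hg, c, hρ⟩, hρB, hρ0⟩ := exists_map_zero_of_mem hH hB hC h0
  have hc : c = 0 := by rwa [hρ, map_zero_of_mem_addPerms hg.2, zero_add] at hρ0
  exact ⟨g, hg.1, by rw [← hρB]; exact image_congr fun y _ => by rw [hρ, hc, add_zero]⟩

theorem exists_map_flag {C C' : Finset A} (hC : C ∈ development H B) (hC' : C' ∈ development H B)
    {x y : A} (hx : x ∈ C) (hy : y ∈ C') :
    ∃ g ∈ H, ∃ c : A, C.image (fun z => g z + c) = C' ∧ g x + c = y := by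
  obtain ⟨ρ, hρ, hρB, hρ0⟩ := exists_map_zero_of_mem hH hB hC hx
  obtain ⟨ρ', hρ', hρ'B, hρ'0⟩ := exists_map_zero_of_mem hH hB hC' hy
  obtain ⟨g, hg, c, hσ⟩ := mul_mem hρ' (inv_mem hρ)
  refine ⟨g, hg.1, c, ?_, by rw [← hσ, Perm.mul_apply, Perm.inv_eq_iff_eq.2 hρ0.symm, hρ'0]⟩
  rw [← image_congr fun z _ => hσ z, ← hρB, image_image, ← hρ'B]
  congr 1
  ext z
  simp

end AffineDevelopment

theorem Subgroup.coe_closure_pair_of_mul_eq {G : Type*} [Group G] [Finite G] {a b : G} {k : ℕ}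
    (hba : b * a = a ^ k * b) :
    (Subgroup.closure {a, b} : Set G) = {g | ∃ i j : ℕ, a ^ i * b ^ j = g} := by
  have hconj (i j : ℕ) : b ^ j * a ^ i = a ^ (k ^ j * i) * b ^ j := by
    have hj : SemiconjBy (b ^ j) a (a ^ k ^ j) := by
      induction j with
      | zero => simp [SemiconjBy]
      | succ j ih =>
        rw [pow_succ, pow_succ, pow_mul]
        exact (ih.pow_right k).mul_left hba
    rw [(hj.pow_right i).eq, ← pow_mul]
  let S : Submonoid G :=
    { carrier := {g | ∃ i j : ℕ, a ^ i * b ^ j = g}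
      mul_mem' := by
        rintro _ _ ⟨i, j, rfl⟩ ⟨i', j', rfl⟩
        refine ⟨i + k ^ j * i', j + j', ?_⟩
        rw [mul_assoc, ← mul_assoc (b ^ j), hconj, pow_add, pow_add]
        simp only [mul_assoc]
      one_mem' := ⟨0, 0, by simp⟩ }
  rw [← Subgroup.coe_toSubmonoid, Subgroup.closure_toSubmonoid_of_finite]
  refine subset_antisymm (Submonoid.closure_le (S := S).2 ?_) ?_
  · rintro _ (rfl | rfl)
    exacts [⟨1, 0, by simp⟩, ⟨0, 1, by simp⟩]
  · rintro _ ⟨i, j, rfl⟩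
    exact mul_mem (pow_mem (Submonoid.subset_closure (by simp)) i)
      (pow_mem (Submonoid.subset_closure (by simp)) j)

theorem Equiv.Perm.pow_apply_eq_pow_mul {M : Type*} [Monoid M] {f : Perm M} {a : M}
    (hf : ∀ y, f y = a * y) (n : ℕ) (y : M) : (f ^ n) y = a ^ n * y := by
  rw [Perm.coe_pow, show ⇑f = (a * ·) from funext hf, mul_left_iterate]

theorem Equiv.Perm.pow_apply_eq_pow_pow {M : Type*} [Monoid M] {f : Perm M} {k : ℕ}
    (hf : ∀ y, f y = y ^ k) (n : ℕ) (y : M) : (f ^ n) y = y ^ k ^ n := by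
  rw [Perm.coe_pow, show ⇑f = (· ^ k) from funext hf, pow_iterate]

theorem sub_mem_or_neg_sub_mem_of_three_nsmul {A : Type*} [AddCommGroup A] [DecidableEq A]
    {w : A} (hw : 3 • w = 0) (e : A) {S : Finset A} (hS : S = {0, e, w, -w, e + w, e - w}) :
    ∀ b ∈ S, (∀ y ∈ S, y - b ∈ S) ∨ (∀ y ∈ S, -(y - b) ∈ S) := by
  subst hS
  simp only [Finset.mem_insert, Finset.mem_singleton]
  rintro b (rfl | rfl | rfl | rfl | rfl | rfl)
  all_goals first
    | (left; rintro y (rfl | rfl | rfl | rfl | rfl | rfl) <;> grind)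
    | (right; rintro y (rfl | rfl | rfl | rfl | rfl | rfl) <;> grind)

section Coordinates

abbrev Coords := ZMod 3 × ZMod 3 × ZMod 3 × ZMod 3

/-- Multiplication by `ω` in coordinates with respect to `1, ω, ω², ω³`, using `ω⁴ = 1 - ω`. -/
def mulX (v : Coords) : Coords := (v.2.2.2, v.1 - v.2.2.2, v.2.1, v.2.2.1)

def powCoords (k : ℕ) : Coords := mulX^[k] (1, 0, 0, 0)

variable {F : Type*} [CommRing F] [CharP F 3]

def ofCoords (ω : F) : Coords →+ F where
  toFun v := let e := ZMod.castHom (dvd_refl 3) F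
    e v.1 + e v.2.1 * ω + e v.2.2.1 * ω ^ 2 + e v.2.2.2 * ω ^ 3
  map_zero' := by simp
  map_add' v w := by simp only [Prod.fst_add, Prod.snd_add, map_add]; ring

variable {ω : F} (hω : ω ^ 4 + ω - 1 = 0)
include hω

theorem ofCoords_mulX (v : Coords) : ofCoords ω (mulX v) = ω * ofCoords ω v := by
  simp only [ofCoords, mulX, AddMonoidHom.coe_mk, ZeroHom.coe_mk, map_sub]
  linear_combination (-ZMod.castHom (dvd_refl 3) F v.2.2.2) * hω

theorem pow_eq_ofCoords (k : ℕ) : ω ^ k = ofCoords ω (powCoords k) := by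
  induction k with
  | zero => simp [powCoords, ofCoords]
  | succ k ih =>
    rw [powCoords, Function.iterate_succ_apply', ← powCoords, ofCoords_mulX hω, ← ih, pow_succ']

theorem pow_forty_eq_neg_one : ω ^ 40 = -1 := by
  rw [pow_eq_ofCoords hω, show powCoords 40 = -powCoords 0 by decide +kernel, map_neg,
    ← pow_eq_ofCoords hω, pow_zero]

theorem pow_fiftyEight_eq_one_add : ω ^ 58 = 1 + ω ^ 16 := by
  rw [pow_eq_ofCoords hω, show powCoords 58 = powCoords 0 + powCoords 16 by decide +kernel,
    map_add, ← pow_eq_ofCoords hω, ← pow_eq_ofCoords hω, pow_zero]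

theorem pow_seventyThree_eq_one_sub : ω ^ 73 = 1 - ω ^ 16 := by
  rw [pow_eq_ofCoords hω, show powCoords 73 = powCoords 0 - powCoords 16 by decide +kernel,
    map_sub, ← pow_eq_ofCoords hω, ← pow_eq_ofCoords hω, pow_zero]

theorem pow_sixteen_sub_one : ω ^ 16 - 1 = ω ^ 33 := by
  rw [pow_eq_ofCoords hω 33, show powCoords 33 = powCoords 16 - powCoords 0 by decide +kernel,
    map_sub, ← pow_eq_ofCoords hω, ← pow_eq_ofCoords hω, pow_zero]

end Coordinates

theorem charP_three_of_card_eq {F : Type*} [Field F] [Fintype F] (hcard : Fintype.card F = 81) :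
    CharP F 3 :=
  charP_of_card_eq_prime_pow (f := 4) hcard

section PrimitiveRootBlocks

variable {F : Type*} [Field F] [DecidableEq F]

def powBlock (ζ : F) (L : Finset ℕ) : Finset F := insert 0 (L.image (ζ ^ ·))

variable {ζ : F} {n : ℕ} (hζ : IsPrimitiveRoot ζ n) {L : Finset ℕ}
include hζ

theorem pow_mem_powBlock_iff (hL : L ⊆ range n) {r : ℕ} (hr : r < n) :
    ζ ^ r ∈ powBlock ζ L ↔ r ∈ L := by
  have hζ0 : ζ ≠ 0 := hζ.ne_zero (by omega)
  simp only [powBlock, mem_insert, pow_eq_zero_iff', hζ0, false_and, false_or, mem_image]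
  constructor
  · rintro ⟨d, hd, hdr⟩
    rwa [← hζ.pow_inj (mem_range.1 (hL hd)) hr hdr]
  · exact fun hrL => ⟨r, hrL, rfl⟩

theorem powBlock_injOn : Set.InjOn (powBlock ζ) {L | L ⊆ range n} := by
  intro L hL L' hL' h
  ext r
  by_cases hr : r < n
  · rw [← pow_mem_powBlock_iff hζ hL hr, ← pow_mem_powBlock_iff hζ hL' hr, h]
  · exact iff_of_false (fun h => hr (mem_range.1 (hL h))) (fun h => hr (mem_range.1 (hL' h)))

theorem card_powBlock (hL : L ⊆ range n) : (powBlock ζ L).card = L.card + 1 := by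
  have h0 : (0 : F) ∉ L.image (ζ ^ ·) := by
    intro h
    obtain ⟨d, hd, hd0⟩ := mem_image.1 h
    have hn : n ≠ 0 := by have := mem_range.1 (hL hd); omega
    exact hζ.ne_zero hn (pow_eq_zero_iff'.1 hd0).1
  rw [powBlock, card_insert_of_notMem h0, card_image_of_injOn]
  exact fun d hd d' hd' h => hζ.pow_inj (mem_range.1 (hL hd)) (mem_range.1 (hL hd')) h

end PrimitiveRootBlocks

section Generators

variable {F : Type*} [Field F] {ω : F} {μ φ : Perm F}
  (hμ : ∀ y, μ y = ω ^ 5 * y) (hφ : ∀ y, φ y = y ^ 9)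
include hμ hφ

theorem mul_pow_apply (i j : ℕ) (y : F) : (μ ^ i * φ ^ j) y = ω ^ (5 * i) * y ^ 9 ^ j := by
  rw [Perm.mul_apply, Perm.pow_apply_eq_pow_mul hμ, Perm.pow_apply_eq_pow_pow hφ, ← pow_mul]

theorem closure_le_addPerms [CharP F 3] : Subgroup.closure {μ, φ} ≤ addPerms F := by
  rw [Subgroup.closure_le, Set.insert_subset_iff, Set.singleton_subset_iff]
  refine ⟨fun u v => by simp only [hμ, mul_add], fun u v => ?_⟩
  simpa only [hφ, show (9 : ℕ) = 3 ^ 2 by rfl] using add_pow_char_pow u v 3 2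

end Generators

section Design

variable {F : Type*} [Field F] [Fintype F] [CharP F 3] {ω : F}
  (hcard : Fintype.card F = 81) (hω : ω ^ 4 + ω - 1 = 0)
include hcard hω

theorem isPrimitiveRoot_of_card_eq : IsPrimitiveRoot ω 80 := by
  have hω0 : ω ≠ 0 := by rintro rfl; norm_num at hω
  have h80 : ω ^ 80 = 1 := by simpa [hcard] using FiniteField.pow_card_sub_one_eq_one ω hω0
  have h40 : ω ^ 40 ≠ 1 := by
    rw [pow_forty_eq_neg_one hω]
    exact Ring.neg_one_ne_one_of_char_ne_two (by rw [ringChar.eq F 3]; norm_num)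
  have h16 : ω ^ 16 ≠ 1 := fun h =>
    pow_ne_zero 33 hω0 (by rw [← pow_sixteen_sub_one hω, h, sub_self])
  have hdvd := orderOf_dvd_of_pow_eq_one h80
  have hdivisors : ∀ d < 81, d ∣ 80 → d ∣ 16 ∨ d ∣ 40 ∨ d = 80 := by decide
  rw [IsPrimitiveRoot.iff_orderOf]
  rcases hdivisors _ (Nat.lt_succ_of_le (Nat.le_of_dvd (by norm_num) hdvd)) hdvd with h | h | h
  · exact absurd (orderOf_dvd_iff_pow_eq_one.1 h) h16
  · exact absurd (orderOf_dvd_iff_pow_eq_one.1 h) h40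
  · exact h

theorem exists_pow_eq_of_ne_zero {y : F} (hy : y ≠ 0) : ∃ k < 80, ω ^ k = y :=
  (isPrimitiveRoot_of_card_eq hcard hω).eq_pow_of_pow_eq_one
    (by simpa [hcard] using FiniteField.pow_card_sub_one_eq_one y hy)

variable {μ φ : Perm F} (hμ : ∀ y, μ y = ω ^ 5 * y) (hφ : ∀ y, φ y = y ^ 9)
include hμ hφ

theorem coe_closure_eq_range :
    (Subgroup.closure {μ, φ} : Set (Perm F)) =
      Set.range fun p : Fin 16 × Fin 2 => μ ^ (p.1 : ℕ) * φ ^ (p.2 : ℕ) := by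
  have h80 := (isPrimitiveRoot_of_card_eq hcard hω).pow_eq_one
  have hμ16 : μ ^ 16 = 1 := Perm.ext fun y => by
    rw [Perm.pow_apply_eq_pow_mul hμ, ← pow_mul, h80, one_mul, Perm.one_apply]
  have hφ2 : φ ^ 2 = 1 := Perm.ext fun y => by
    rw [Perm.pow_apply_eq_pow_pow hφ, Perm.one_apply,
      show 9 ^ 2 = Fintype.card F by rw [hcard]; rfl]
    exact FiniteField.pow_card y
  have hφμ : φ * μ = μ ^ 9 * φ := Perm.ext fun y => by
    rw [Perm.mul_apply, Perm.mul_apply, hμ, hφ, hφ, Perm.pow_apply_eq_pow_mul hμ]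
    ring
  rw [Subgroup.coe_closure_pair_of_mul_eq hφμ]
  ext g
  constructor
  · rintro ⟨i, j, rfl⟩
    exact ⟨(⟨i % 16, by omega⟩, ⟨j % 2, by omega⟩),
      by rw [pow_eq_pow_mod i hμ16, pow_eq_pow_mod j hφ2]⟩
  · rintro ⟨p, rfl⟩
    exact ⟨p.1, p.2, rfl⟩

theorem card_closure : Nat.card (Subgroup.closure {μ, φ}) = 32 := by
  have hprim := isPrimitiveRoot_of_card_eq hcard hω
  have hinj : Function.Injective fun p : Fin 16 × Fin 2 => μ ^ (p.1 : ℕ) * φ ^ (p.2 : ℕ) := by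
    rintro ⟨i, j⟩ ⟨i', j'⟩ h
    have h1 := congrArg (· 1) h
    have hω' := congrArg (· ω) h
    simp only [mul_pow_apply hμ hφ, one_pow, mul_one] at h1 hω'
    have hi : (i : ℕ) = i' := by
      have := hprim.pow_inj (by omega) (by omega) h1
      omega
    rw [h1, mul_right_inj' (pow_ne_zero _ (hprim.ne_zero (by norm_num)))] at hω'
    have hj := hprim.pow_inj (by fin_cases j <;> norm_num) (by fin_cases j' <;> norm_num) hω'
    exact Prod.ext (Fin.ext hi) (Fin.ext (Nat.pow_right_injective (by norm_num) hj))
  rw [← SetLike.coe_sort_coe, coe_closure_eq_range hcard hω hμ hφ, Nat.card_range_of_injective hinj]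
  simp

end Design

def baseLogs : Finset ℕ := {0, 16, 56, 58, 73}

/-- The discrete logarithms of the nonzero points of `(μⁱφʲ) B`. -/
def logBlock (i j : ℕ) : Finset ℕ := baseLogs.image fun d => (5 * i + 9 ^ j * d) % 80

def logBlocks : Finset (Finset ℕ) := (range 16 ×ˢ range 2).image fun p => logBlock p.1 p.2

theorem subset_range_of_mem_logBlocks {L : Finset ℕ} (hL : L ∈ logBlocks) : L ⊆ range 80 := by
  obtain ⟨p, -, rfl⟩ := mem_image.1 hL
  intro d hd
  obtain ⟨e, -, rfl⟩ := mem_image.1 hd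
  exact mem_range.2 (Nat.mod_lt _ (by norm_num))

theorem card_filter_mem_logBlocks : ∀ r < 3, (logBlocks.filter (r ∈ ·)).card = 2 := by
  decide +kernel

/-- In discrete logarithms `μⁱφʲ` acts by `k ↦ 5i + 9ʲk`: `G₀` has three orbits on `F*`,
represented by `1, ω, ω²`. -/
theorem exists_log_orbit_rep : ∀ k < 80, ∃ i < 16, ∃ j < 2, (5 * i + 9 ^ j * k) % 80 < 3 := by
  decide +kernel

section BaseBlock

variable {F : Type*} [Field F] [DecidableEq F] [CharP F 3] {ω : F}

def baseBlock (ω : F) : Finset F := {0, 1, ω ^ 16, ω ^ 56, ω ^ 58, ω ^ 73}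

omit [CharP F 3] in
theorem baseBlock_eq_powBlock : baseBlock ω = powBlock ω baseLogs := by
  simp [baseBlock, powBlock, baseLogs]

theorem card_baseBlock [Fintype F] (hcard : Fintype.card F = 81) (hω : ω ^ 4 + ω - 1 = 0) :
    (baseBlock ω).card = 6 := by
  rw [baseBlock_eq_powBlock, card_powBlock (isPrimitiveRoot_of_card_eq hcard hω) (by decide)]
  rfl

theorem exists_mem_closure_sub_mem_baseBlock {μ φ : Perm F} (hω : ω ^ 4 + ω - 1 = 0)
    (hμ : ∀ y, μ y = ω ^ 5 * y) :
    ∀ b ∈ baseBlock ω, ∃ h ∈ Subgroup.closure {μ, φ},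
      ∀ y ∈ baseBlock ω, h (y - b) ∈ baseBlock ω := by
  have h56 : ω ^ 56 = -ω ^ 16 := by rw [pow_add ω 40 16, pow_forty_eq_neg_one hω, neg_one_mul]
  have hneg (y : F) : (μ ^ 8) y = -y := by
    rw [Perm.pow_apply_eq_pow_mul hμ, ← pow_mul, pow_forty_eq_neg_one hω, neg_one_mul]
  have h3 : 3 • ω ^ 16 = 0 := by rw [nsmul_eq_mul, Nat.cast_ofNat, CharP.ofNat_eq_zero, zero_mul]
  have hB : baseBlock ω = {0, 1, ω ^ 16, -ω ^ 16, 1 + ω ^ 16, 1 - ω ^ 16} := by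
    rw [baseBlock, h56, pow_fiftyEight_eq_one_add hω, pow_seventyThree_eq_one_sub hω]
  intro b hb
  rcases sub_mem_or_neg_sub_mem_of_three_nsmul h3 1 hB b hb with h | h
  · exact ⟨1, one_mem _, h⟩
  · exact ⟨μ ^ 8, pow_mem (Subgroup.subset_closure (Set.mem_insert μ _)) 8,
      fun y hy => hneg (y - b) ▸ h y hy⟩

variable [Fintype F] (hcard : Fintype.card F = 81) (hω : ω ^ 4 + ω - 1 = 0)
  {μ φ : Perm F} (hμ : ∀ y, μ y = ω ^ 5 * y) (hφ : ∀ y, φ y = y ^ 9)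
include hcard hω hμ hφ

theorem image_baseBlock (i j : ℕ) :
    (baseBlock ω).image (μ ^ i * φ ^ j) = powBlock ω (logBlock i j) := by
  have h80 := (isPrimitiveRoot_of_card_eq hcard hω).pow_eq_one
  rw [baseBlock_eq_powBlock, powBlock, powBlock, logBlock, image_insert, image_image, image_image]
  congr 1
  · simp [mul_pow_apply hμ hφ]
  · refine image_congr fun d _ => ?_
    simp only [Function.comp_apply, mul_pow_apply hμ hφ]
    rw [← pow_mul, ← pow_add, mul_comm d, ← pow_eq_pow_mod _ h80]

theorem mem_development_zero_mem_iff {C : Finset F} :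
    C ∈ development (Subgroup.closure {μ, φ}) (baseBlock ω) ∧ 0 ∈ C ↔
      ∃ L ∈ logBlocks, C = powBlock ω L := by
  constructor
  · rintro ⟨hC, h0⟩
    obtain ⟨g, hg, rfl⟩ := exists_eq_image_of_zero_mem (closure_le_addPerms hμ hφ)
      (exists_mem_closure_sub_mem_baseBlock hω hμ) hC h0
    rw [← SetLike.mem_coe, coe_closure_eq_range hcard hω hμ hφ] at hg
    obtain ⟨⟨i, j⟩, rfl⟩ := hg
    refine ⟨logBlock i j, ?_, image_baseBlock hcard hω hμ hφ i j⟩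
    exact mem_image.2 ⟨(i, j), mem_product.2 ⟨mem_range.2 i.2, mem_range.2 j.2⟩, rfl⟩
  · rintro ⟨L, hL, rfl⟩
    obtain ⟨⟨i, j⟩, -, rfl⟩ := mem_image.1 hL
    refine ⟨⟨μ ^ i * φ ^ j, ?_, 0, ?_⟩, mem_insert_self _ _⟩
    · exact mul_mem (pow_mem (Subgroup.subset_closure (by simp)) i)
        (pow_mem (Subgroup.subset_closure (by simp)) j)
    · simp only [add_zero]
      exact (image_baseBlock hcard hω hμ hφ i j).symm

theorem ncard_blocks_through_zero_pow {r : ℕ} (hr : r < 3) :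
    {C | C ∈ development (Subgroup.closure {μ, φ}) (baseBlock ω) ∧ 0 ∈ C ∧ ω ^ r ∈ C}.ncard =
      2 := by
  have hprim := isPrimitiveRoot_of_card_eq hcard hω
  have hset : {C | C ∈ development (Subgroup.closure {μ, φ}) (baseBlock ω) ∧ 0 ∈ C ∧ ω ^ r ∈ C} =
      powBlock ω '' ↑(logBlocks.filter (r ∈ ·)) := by
    ext C
    simp only [Set.mem_ofPred_eq, Set.mem_image, coe_filter]
    constructor
    · rintro ⟨hC, h0, hrC⟩
      obtain ⟨L, hL, rfl⟩ := (mem_development_zero_mem_iff hcard hω hμ hφ).1 ⟨hC, h0⟩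
      exact ⟨L, ⟨hL, (pow_mem_powBlock_iff hprim (subset_range_of_mem_logBlocks hL)
        (by omega)).1 hrC⟩, rfl⟩
    · rintro ⟨L, ⟨hL, hrL⟩, rfl⟩
      exact ⟨((mem_development_zero_mem_iff hcard hω hμ hφ).2 ⟨L, hL, rfl⟩).1,
        mem_insert_self _ _,
        (pow_mem_powBlock_iff hprim (subset_range_of_mem_logBlocks hL) (by omega)).2 hrL⟩
  have hinj : Set.InjOn (powBlock ω) ↑(logBlocks.filter (r ∈ ·)) :=
    (powBlock_injOn hprim).mono fun L hL => subset_range_of_mem_logBlocks (mem_filter.1 hL).1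
  rw [hset, hinj.ncard_image, Set.ncard_coe_finset]
  exact card_filter_mem_logBlocks r hr

theorem ncard_blocks_through_pair {x y : F} (hxy : x ≠ y) :
    {C | C ∈ development (Subgroup.closure {μ, φ}) (baseBlock ω) ∧ x ∈ C ∧ y ∈ C}.ncard = 2 := by
  obtain ⟨k, hk, hxk⟩ := exists_pow_eq_of_ne_zero hcard hω (sub_ne_zero.2 hxy.symm)
  obtain ⟨i, -, j, -, hr⟩ := exists_log_orbit_rep k hk
  have hH := closure_le_addPerms hμ hφ
  have hg : μ ^ i * φ ^ j ∈ Subgroup.closure {μ, φ} :=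
    mul_mem (pow_mem (Subgroup.subset_closure (by simp)) i)
      (pow_mem (Subgroup.subset_closure (by simp)) j)
  let σ : Perm F := (μ ^ i * φ ^ j).trans (Equiv.addRight (-(μ ^ i * φ ^ j) x))
  have hσ : σ ∈ affineExtension (Subgroup.closure {μ, φ}) :=
    ⟨_, ⟨hg, hH hg⟩, _, fun _ => rfl⟩
  have hσx : σ x = 0 := add_neg_cancel _
  have hσy : σ y = ω ^ ((5 * i + 9 ^ j * k) % 80) := by
    change (μ ^ i * φ ^ j) y + -(μ ^ i * φ ^ j) x = _
    rw [← sub_eq_add_neg, ← map_sub_of_mem_addPerms (hH hg), ← hxk, mul_pow_apply hμ hφ, ← pow_mul,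
      ← pow_add, mul_comm k, ← pow_eq_pow_mod _ (isPrimitiveRoot_of_card_eq hcard hω).pow_eq_one]
  rw [← ncard_blocks_through_apply hH hσ, hσx, hσy]
  exact ncard_blocks_through_zero_pow hcard hω hμ hφ hr

end BaseBlock

/-- Let `F = GF(3)[x]/(x⁴ + x − 1) ≅ GF(3⁴)` (presented here as a field
with 81 elements together with a root `ω` of `X⁴ + X − 1`).  Then `ω` generates `F*`, and
with `B = {0, 1, ω¹⁶, ω⁵⁶, ω⁵⁸, ω⁷³}`, `G₀ = ⟨μ, φ⟩` where `μ : y ↦ ω⁵y`, `φ : y ↦ y⁹`,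
and `G = T ⋊ G₀`: the group `G₀` has order 32, the orbit of `B` under `G` is the block set
of a 2-(81,6,2) design, and `G` acts flag-transitively on it. -/
theorem stmt_12 (F : Type*) [Field F] [Fintype F] [DecidableEq F]
    (hcard : Fintype.card F = 81) (ω : F) (hω : ω ^ 4 + ω - 1 = 0) :
    (∀ y : F, y ≠ 0 → ∃ n : ℕ, ω ^ n = y) ∧
    ∃ μ φ : Equiv.Perm F,
      (∀ y : F, μ y = ω ^ 5 * y) ∧ (∀ y : F, φ y = y ^ 9) ∧
      Nat.card ↥(Subgroup.closure {μ, φ} : Subgroup (Equiv.Perm F)) = 32 ∧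
      (∀ C ∈ {C : Finset F | ∃ g ∈ Subgroup.closure {μ, φ}, ∃ c : F,
          C = ({0, 1, ω ^ 16, ω ^ 56, ω ^ 58, ω ^ 73} : Finset F).image (fun y => g y + c)},
        C.card = 6) ∧
      (∀ x y : F, x ≠ y →
        {C : Finset F | (∃ g ∈ Subgroup.closure {μ, φ}, ∃ c : F,
          C = ({0, 1, ω ^ 16, ω ^ 56, ω ^ 58, ω ^ 73} : Finset F).image (fun z => g z + c)) ∧
          x ∈ C ∧ y ∈ C}.ncard = 2) ∧
      (∀ C ∈ {C : Finset F | ∃ g ∈ Subgroup.closure {μ, φ}, ∃ c : F,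
          C = ({0, 1, ω ^ 16, ω ^ 56, ω ^ 58, ω ^ 73} : Finset F).image (fun y => g y + c)},
       ∀ C' ∈ {C : Finset F | ∃ g ∈ Subgroup.closure {μ, φ}, ∃ c : F,
          C = ({0, 1, ω ^ 16, ω ^ 56, ω ^ 58, ω ^ 73} : Finset F).image (fun y => g y + c)},
       ∀ x ∈ C, ∀ y ∈ C',
        ∃ g ∈ Subgroup.closure {μ, φ}, ∃ c : F,
          C.image (fun z => g z + c) = C' ∧ g x + c = y) := by
  have := charP_three_of_card_eq hcard
  have hω0 : ω ≠ 0 := (isPrimitiveRoot_of_card_eq hcard hω).ne_zero (by norm_num)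
  let μ : Perm F := Equiv.mulLeft₀ (ω ^ 5) (pow_ne_zero 5 hω0)
  let φ : Perm F := (iterateFrobeniusEquiv F 3 2).toEquiv
  have hμ : ∀ y, μ y = ω ^ 5 * y := fun _ => rfl
  have hφ : ∀ y, φ y = y ^ 9 := fun y => iterateFrobeniusEquiv_def F 3 2 y
  have hH := closure_le_addPerms hμ hφ
  have hB := exists_mem_closure_sub_mem_baseBlock (φ := φ) hω hμ
  refine ⟨fun y hy => ?_, μ, φ, hμ, hφ, card_closure hcard hω hμ hφ,
    fun C hC => (card_of_mem_development hC).trans (card_baseBlock hcard hω),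
    fun x y hxy => ncard_blocks_through_pair hcard hω hμ hφ hxy,
    fun C hC C' hC' x hx y hy => exists_map_flag hH hB hC hC' hx hy⟩
  obtain ⟨n, -, hn⟩ := exists_pow_eq_of_ne_zero hcard hω hy
  exact ⟨n, hn⟩
end
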